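/- arXiv:1206.3161 — 8 statements merged into one kernel-verified Lean document; each statement's English description precedes it below -/
import Mathlib

section
/- For every n ≥ 1 and every family v : Fin n → ℍ of real quaternions such that each v i is purely imaginary (its real part is 0) and the total length satisfies ∑ i, ‖v i‖ = 2, there exists a family q : Fin n → ℍ with ∑ i, ‖q i‖² = 2 and Hopf(q i) = v i for every i, where Hopf(q) = q̄ · 𝐢 · q. In other words, the coordinatewise Hopf map sends the sphere of radius √2 in ℍⁿ onto the space of open n-edge polygons of total length 2 in ℝ³ (identified with purely imaginary quaternions). -/
/-!
It suffices to find, for each purely imaginary `v` with `r = ‖v‖`, a preimage `q` with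
`‖q‖² = r`. For `p = r - 𝐢 v` one has `r 𝐢 p = p v` because `v² = -r²`, hence
`r p̄ 𝐢 p = p̄ p v = ‖p‖² v` with `‖p‖² = 2r (r + v.imI)`; rescaling `p` gives the preimage unless
`v = -r 𝐢`, where `√r 𝐣` works.
-/

open scoped Quaternion

/-- The quaternion unit 𝐢. -/
noncomputable def qI : ℍ[ℝ] := ⟨0, 1, 0, 0⟩

/-- The Hopf map `q ↦ q̄ · 𝐢 · q`. -/
noncomputable def Hopf (q : ℍ[ℝ]) : ℍ[ℝ] := star q * qI * q

open Quaternion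

@[simp] lemma re_qI : qI.re = 0 := rfl
@[simp] lemma imI_qI : qI.imI = 1 := rfl
@[simp] lemma imJ_qI : qI.imJ = 0 := rfl
@[simp] lemma imK_qI : qI.imK = 0 := rfl

noncomputable def qJ : ℍ[ℝ] := ⟨0, 0, 1, 0⟩

@[simp] lemma re_qJ : qJ.re = 0 := rfl
@[simp] lemma imI_qJ : qJ.imI = 0 := rfl
@[simp] lemma imJ_qJ : qJ.imJ = 1 := rfl
@[simp] lemma imK_qJ : qJ.imK = 0 := rfl

lemma qI_mul_qI : qI * qI = -1 := by
  ext <;> simp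

lemma normSq_qJ : normSq qJ = 1 := by
  simp [normSq_def']

lemma sq_norm_eq_normSq (q : ℍ[ℝ]) : ‖q‖ ^ 2 = normSq q := by
  rw [normSq_eq_norm_mul_self, sq]

lemma sq_norm_of_re_eq_zero {v : ℍ[ℝ]} (hv : v.re = 0) :
    ‖v‖ ^ 2 = v.imI ^ 2 + v.imJ ^ 2 + v.imK ^ 2 := by
  rw [sq_norm_eq_normSq, normSq_def', hv]
  ring

lemma mul_self_of_re_eq_zero {v : ℍ[ℝ]} (hv : v.re = 0) : v * v = -(‖v‖ ^ 2 • 1) := by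
  calc v * v = -(v * star v) := by rw [star_eq_neg.mpr hv, mul_neg, neg_neg]
    _ = -(‖v‖ ^ 2 • 1) := by
      rw [self_mul_star, ← sq_norm_eq_normSq, ← coe_mul_eq_smul, mul_one]

lemma hopf_smul (c : ℝ) (q : ℍ[ℝ]) : Hopf (c • q) = c ^ 2 • Hopf q := by
  simp only [Hopf, Quaternion.star_smul, smul_mul_assoc, mul_smul_comm, smul_smul, sq]

lemma hopf_qJ : Hopf qJ = -qI := by
  ext <;> simp [Hopf]

lemma norm_smul_qI_mul_sub_qI_mul {v : ℍ[ℝ]} (hv : v.re = 0) :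
    ‖v‖ • (qI * (‖v‖ - qI * v)) = (‖v‖ - qI * v) * v := by
  simp only [mul_sub, sub_mul, coe_mul_eq_smul, mul_coe_eq_smul, mul_smul_comm, mul_assoc,
    mul_self_of_re_eq_zero hv, ← mul_assoc qI qI, qI_mul_qI, mul_neg, mul_one, neg_mul, one_mul]
  module

lemma normSq_sub_qI_mul {v : ℍ[ℝ]} (hv : v.re = 0) :
    normSq ((‖v‖ : ℍ[ℝ]) - qI * v) = ‖v‖ * (2 * (‖v‖ + v.imI)) := by
  rw [normSq_def']
  simp [hv]
  linear_combination -sq_norm_of_re_eq_zero hv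

lemma hopf_sub_qI_mul {v : ℍ[ℝ]} (hv : v.re = 0) (hv0 : v ≠ 0) :
    Hopf (‖v‖ - qI * v) = (2 * (‖v‖ + v.imI)) • v := by
  have key : ‖v‖ • Hopf (‖v‖ - qI * v) = normSq ((‖v‖ : ℍ[ℝ]) - qI * v) • v := by
    rw [Hopf, mul_assoc, ← mul_smul_comm, norm_smul_qI_mul_sub_qI_mul hv, ← mul_assoc,
      star_mul_self, coe_mul_eq_smul]
  rw [normSq_sub_qI_mul hv, mul_smul] at key
  exact smul_right_injective _ (norm_ne_zero_iff.mpr hv0) key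

lemma eq_neg_norm_smul_qI {v : ℍ[ℝ]} (hv : v.re = 0) (h : ‖v‖ + v.imI = 0) :
    v = -(‖v‖ • qI) := by
  have hJK : v.imJ ^ 2 + v.imK ^ 2 = 0 := by
    linear_combination (‖v‖ - v.imI) * h - sq_norm_of_re_eq_zero hv
  obtain ⟨hJ, hK⟩ := (add_eq_zero_iff_of_nonneg (sq_nonneg _) (sq_nonneg _)).mp hJK
  ext <;> simp_all
  linarith

lemma neg_norm_le_imI (v : ℍ[ℝ]) : -‖v‖ ≤ v.imI := by
  refine (abs_le_of_sq_le_sq' ?_ (norm_nonneg v)).1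
  rw [sq_norm_eq_normSq, normSq_def']
  nlinarith [sq_nonneg v.re, sq_nonneg v.imJ, sq_nonneg v.imK]

theorem exists_hopf_eq_of_re_eq_zero {v : ℍ[ℝ]} (hv : v.re = 0) :
    ∃ q : ℍ[ℝ], ‖q‖ ^ 2 = ‖v‖ ∧ Hopf q = v := by
  rcases eq_or_ne (‖v‖ + v.imI) 0 with h | h
  · refine ⟨√‖v‖ • qJ, ?_, ?_⟩
    · rw [sq_norm_eq_normSq, normSq_smul, normSq_qJ, mul_one, Real.sq_sqrt (norm_nonneg v)]
    · rw [hopf_smul, hopf_qJ, Real.sq_sqrt (norm_nonneg v), smul_neg, ← eq_neg_norm_smul_qI hv h]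
  have hv0 : v ≠ 0 := by rintro rfl; simp at h
  have hpos : 0 < 2 * (‖v‖ + v.imI) := by
    have := neg_norm_le_imI v
    exact mul_pos two_pos (lt_of_le_of_ne (by linarith) h.symm)
  refine ⟨(√(2 * (‖v‖ + v.imI)))⁻¹ • (‖v‖ - qI * v), ?_, ?_⟩
  · rw [sq_norm_eq_normSq, normSq_smul, normSq_sub_qI_mul hv, inv_pow, Real.sq_sqrt hpos.le]
    field_simp
  · rw [hopf_smul, hopf_sub_qI_mul hv hv0, smul_smul, inv_pow, Real.sq_sqrt hpos.le,
      inv_mul_cancel₀ hpos.ne', one_smul]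

theorem hopf_surjective_onto_arm_space_general (n : ℕ) (v : Fin n → ℍ[ℝ])
    (him : ∀ i, (v i).re = 0) (hlen : ∑ i, ‖v i‖ = 2) :
    ∃ q : Fin n → ℍ[ℝ], (∑ i, ‖q i‖ ^ 2 = 2) ∧ ∀ i, Hopf (q i) = v i := by
  choose q hq_norm hq_hopf using fun i => exists_hopf_eq_of_re_eq_zero (him i)
  exact ⟨q, by simp only [hq_norm, hlen], hq_hopf⟩

/-- The coordinatewise Hopf map sends the sphere of radius √2 in ℍⁿ onto the space of
open `n`-edge polygons of total length 2 in ℝ³ (purely imaginary quaternions). -/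
theorem hopf_surjective_onto_arm_space (n : ℕ) (hn : 1 ≤ n) (v : Fin n → ℍ[ℝ])
    (him : ∀ i, (v i).re = 0) (hlen : ∑ i, ‖v i‖ = 2) :
    ∃ q : Fin n → ℍ[ℝ], (∑ i, ‖q i‖ ^ 2 = 2) ∧ ∀ i, Hopf (q i) = v i :=
  hopf_surjective_onto_arm_space_general n v him hlen
end

section
/- Let n ≥ 1, let u, v : Fin n → ℂ be unit vectors (∑ i, |u i|² = 1 and ∑ i, |v i|² = 1), and let θ ∈ ℝ. For each i define the quaternion q i ∈ ℍ whose four real components are (√2 cos θ · Re(u i), √2 cos θ · Im(u i), √2 sin θ · Re(v i), √2 sin θ · Im(v i)), i.e. q i = √2 (cos θ · u i + sin θ · (v i)𝐣). Then ‖∑ i, Hopf(q i)‖² = 4 cos²(2θ) + 4 sin²(2θ) · |∑ i, conj(u i) · v i|², i.e. the squared failure-to-close of the polygonal arm with edges Hopf(q i) equals 4cos²2θ + 4sin²2θ·|⟨u,v⟩|². -/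
open scoped Quaternion
open Real

/-- The quaternion `√2 (cos θ · u + sin θ · v·𝐣)` for complex numbers `u`, `v`. -/
noncomputable def joinCoord (θ : ℝ) (u v : ℂ) : ℍ[ℝ] :=
  ⟨Real.sqrt 2 * Real.cos θ * u.re, Real.sqrt 2 * Real.cos θ * u.im,
   Real.sqrt 2 * Real.sin θ * v.re, Real.sqrt 2 * Real.sin θ * v.im⟩

/-!
Componentwise, `Hopf (joinCoord θ a b)` has `𝐢`-part `2cos²θ|a|² - 2sin²θ|b|²` and `𝐣𝐤`-part
`(imJ, imK) = 2 sin 2θ · (-Im, Re)` of `conj(a) b`. Summing over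
the edges and using `|u| = |v| = 1`, the closing vector is `2cos 2θ` along `𝐢` plus `2 sin 2θ ⟨u,v⟩`
in the `𝐣𝐤`-plane, and Pythagoras gives the claim.
-/

open ComplexConjugate

namespace Quaternion

variable {R ι : Type*} [CommRing R] (s : Finset ι) (f : ι → ℍ[R])

theorem re_sum : (∑ i ∈ s, f i).re = ∑ i ∈ s, (f i).re :=
  map_sum (QuaternionAlgebra.reₗ _ _ _ : ℍ[R] →ₗ[R] R) f s

theorem imI_sum : (∑ i ∈ s, f i).imI = ∑ i ∈ s, (f i).imI :=
  map_sum (QuaternionAlgebra.imIₗ _ _ _ : ℍ[R] →ₗ[R] R) f s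

theorem imJ_sum : (∑ i ∈ s, f i).imJ = ∑ i ∈ s, (f i).imJ :=
  map_sum (QuaternionAlgebra.imJₗ _ _ _ : ℍ[R] →ₗ[R] R) f s

theorem imK_sum : (∑ i ∈ s, f i).imK = ∑ i ∈ s, (f i).imK :=
  map_sum (QuaternionAlgebra.imKₗ _ _ _ : ℍ[R] →ₗ[R] R) f s

theorem sq_norm_eq (q : ℍ[ℝ]) : ‖q‖ ^ 2 = q.re ^ 2 + q.imI ^ 2 + q.imJ ^ 2 + q.imK ^ 2 := by
  rw [sq, ← normSq_eq_norm_mul_self, normSq_def']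

end Quaternion

theorem hopf_joinCoord (θ : ℝ) (a b : ℂ) :
    Hopf (joinCoord θ a b) =
      ⟨0, 2 * cos θ ^ 2 * ‖a‖ ^ 2 - 2 * sin θ ^ 2 * ‖b‖ ^ 2,
        -(2 * sin (2 * θ) * (conj a * b).im), 2 * sin (2 * θ) * (conj a * b).re⟩ := by
  have sqrt_two_mul_self : √2 * √2 = 2 := Real.mul_self_sqrt zero_le_two
  simp only [Complex.sq_norm, Complex.normSq_apply, Complex.mul_re, Complex.mul_im,
    Complex.conj_re, Complex.conj_im, sin_two_mul]
  -- `Hopf` is expanded first: an unfolded `joinCoord` is typed `ℍ[ℝ,-1,0,-1]`, not `ℍ[ℝ]`, and the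
  -- `Quaternion` lemmas would no longer match
  ext <;> simp only [Hopf, Quaternion.re_mul, Quaternion.imI_mul, Quaternion.imJ_mul,
    Quaternion.imK_mul, Quaternion.re_star, Quaternion.imI_star, Quaternion.imJ_star,
    Quaternion.imK_star] <;> simp only [joinCoord, qI]
  · ring
  · linear_combination (cos θ ^ 2 * (a.re * a.re + a.im * a.im)
      - sin θ ^ 2 * (b.re * b.re + b.im * b.im)) * sqrt_two_mul_self
  · linear_combination (2 * cos θ * sin θ * (a.im * b.re - a.re * b.im)) * sqrt_two_mul_self
  · linear_combination (2 * cos θ * sin θ * (a.re * b.re + a.im * b.im)) * sqrt_two_mul_self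

theorem sum_hopf_joinCoord {ι : Type*} (s : Finset ι) (θ : ℝ) (u v : ι → ℂ) :
    ∑ i ∈ s, Hopf (joinCoord θ (u i) (v i)) =
      ⟨0, 2 * cos θ ^ 2 * ∑ i ∈ s, ‖u i‖ ^ 2 - 2 * sin θ ^ 2 * ∑ i ∈ s, ‖v i‖ ^ 2,
        -(2 * sin (2 * θ) * (∑ i ∈ s, conj (u i) * v i).im),
        2 * sin (2 * θ) * (∑ i ∈ s, conj (u i) * v i).re⟩ := by
  ext <;> simp only [Quaternion.re_sum, Quaternion.imI_sum, Quaternion.imJ_sum,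
    Quaternion.imK_sum] <;>
    simp only [hopf_joinCoord, Finset.sum_const_zero, Finset.mul_sum, Finset.sum_sub_distrib,
      Finset.sum_neg_distrib, Complex.re_sum, Complex.im_sum]

theorem squared_failure_to_close_general (n : ℕ) (u v : Fin n → ℂ)
    (hu : ∑ i, ‖u i‖ ^ 2 = 1) (hv : ∑ i, ‖v i‖ ^ 2 = 1) (θ : ℝ) :
    ‖∑ i, Hopf (joinCoord θ (u i) (v i))‖ ^ 2
      = 4 * Real.cos (2 * θ) ^ 2
        + 4 * Real.sin (2 * θ) ^ 2 * ‖∑ i, (starRingEnd ℂ) (u i) * v i‖ ^ 2 := by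
  rw [Quaternion.sq_norm_eq, sum_hopf_joinCoord, hu, hv, Complex.sq_norm, Complex.normSq_apply,
    cos_two_mul']
  ring

/-- The squared failure-to-close of the polygonal arm with edges `Hopf(q i)`, where
`q i = √2 (cos θ · u i + sin θ · (v i)𝐣)`, equals `4cos²2θ + 4sin²2θ·|⟨u,v⟩|²`. -/
theorem squared_failure_to_close (n : ℕ) (hn : 1 ≤ n) (u v : Fin n → ℂ)
    (hu : ∑ i, ‖u i‖ ^ 2 = 1) (hv : ∑ i, ‖v i‖ ^ 2 = 1) (θ : ℝ) :
    ‖∑ i, Hopf (joinCoord θ (u i) (v i))‖ ^ 2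
      = 4 * Real.cos (2 * θ) ^ 2
        + 4 * Real.sin (2 * θ) ^ 2 * ‖∑ i, (starRingEnd ℂ) (u i) * v i‖ ^ 2 :=
  squared_failure_to_close_general n u v hu hv θ
end

section
/- Let n ≥ 2, let d ≥ 1, let e : Fin n → EuclideanSpace ℝ (Fin d) be any list of n edge vectors, let ℓ = ‖∑ j, e j‖ be the failure to close, and let k satisfy 1 ≤ k ≤ n. Then the average over all n! permutations σ of Fin n of the squared length of the chord skipping the first k edges satisfies (1/n!) · ∑_{σ ∈ Perm(Fin n)} ‖∑_{j=0}^{k-1} e (σ j)‖² = (k(n-k)/(n(n-1))) · ∑ j, ‖e j‖² + (k(k-1)/(n(n-1))) · ℓ². -/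
open Finset RealInnerProductSpace

private lemma perm_reindex {α : Type*} [Fintype α] [DecidableEq α]
    (g : Equiv.Perm α → ℝ) (π : Equiv.Perm α) :
    ∑ σ : Equiv.Perm α, g σ = ∑ σ : Equiv.Perm α, g (σ * π) :=
  (Fintype.sum_equiv (Equiv.mulRight π) _ _ (fun _ => rfl)).symm

private lemma pair_inv {n d : ℕ} (e : Fin n → EuclideanSpace ℝ (Fin d))
    {a b c f : Fin n} (hab : a ≠ b) (hcf : c ≠ f) :
    ∑ σ : Equiv.Perm (Fin n), ⟪e (σ a), e (σ b)⟫
      = ∑ σ : Equiv.Perm (Fin n), ⟪e (σ c), e (σ f)⟫ := by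
  set π : Equiv.Perm (Fin n) :=
    (Equiv.swap c a).trans (Equiv.swap ((Equiv.swap c a) f) b) with hπ
  have hπc : π c = a := by
    simp only [hπ, Equiv.trans_apply, Equiv.swap_apply_left]
    rw [Equiv.swap_apply_of_ne_of_ne]
    · intro h
      apply hcf
      apply (Equiv.swap c a).injective
      rw [Equiv.swap_apply_left]
      exact h
    · exact hab
  have hπf : π f = b := by
    simp only [hπ, Equiv.trans_apply, Equiv.swap_apply_left]
  rw [perm_reindex (fun σ => ⟪e (σ c), e (σ f)⟫) π]
  refine Finset.sum_congr rfl fun σ _ => ?_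
  simp only [Equiv.Perm.mul_apply, hπc, hπf]

private lemma diag_inv {n d : ℕ} (e : Fin n → EuclideanSpace ℝ (Fin d)) (a c : Fin n) :
    ∑ σ : Equiv.Perm (Fin n), ⟪e (σ a), e (σ a)⟫
      = ∑ σ : Equiv.Perm (Fin n), ⟪e (σ c), e (σ c)⟫ := by
  rw [perm_reindex (fun σ => ⟪e (σ c), e (σ c)⟫) (Equiv.swap c a)]
  refine Finset.sum_congr rfl fun σ _ => ?_
  simp only [Equiv.Perm.mul_apply, Equiv.swap_apply_left]

/-- Average over all rearrangements of a set of `n` edges of the squared length of the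
chord skipping the first `k` edges: `sChord(k,𝒫) = (k(n-k)/(n(n-1)))·∑‖eⱼ‖² + (k(k-1)/(n(n-1)))·ℓ²`. -/
theorem sChord_formula (n d k : ℕ) (hn : 2 ≤ n) (hd : 1 ≤ d) (hk1 : 1 ≤ k) (hkn : k ≤ n)
    (e : Fin n → EuclideanSpace ℝ (Fin d)) :
    (1 / (n.factorial : ℝ)) *
        ∑ σ : Equiv.Perm (Fin n), ‖∑ j : Fin k, e (σ (Fin.castLE hkn j))‖ ^ 2
      = ((k : ℝ) * ((n : ℝ) - k) / ((n : ℝ) * ((n : ℝ) - 1))) * ∑ j, ‖e j‖ ^ 2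
        + ((k : ℝ) * ((k : ℝ) - 1) / ((n : ℝ) * ((n : ℝ) - 1))) * ‖∑ j, e j‖ ^ 2 := by
  have hn0 : (n : ℝ) ≠ 0 := by positivity
  have hn1 : (n : ℝ) - 1 ≠ 0 := by
    have : (2 : ℝ) ≤ n := by exact_mod_cast hn
    linarith
  have hN : (n.factorial : ℝ) ≠ 0 := by positivity
  set S : ℝ := ∑ j, ‖e j‖ ^ 2 with hS
  set L : ℝ := ‖∑ j, e j‖ ^ 2 with hL
  have expand : ∀ {m : ℕ} (v : Fin m → EuclideanSpace ℝ (Fin d)),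
      ‖∑ j, v j‖ ^ 2 = ∑ i, ∑ j, ⟪v i, v j⟫ := by
    intro m v
    rw [← real_inner_self_eq_norm_sq, sum_inner]
    exact Finset.sum_congr rfl fun i _ => inner_sum _ _ _
  set a0 : Fin n := ⟨0, by omega⟩ with ha0
  set a1 : Fin n := ⟨1, by omega⟩ with ha1
  have h01 : a0 ≠ a1 := by
    simp [ha0, ha1, Fin.ext_iff]
  set D : ℝ := ∑ σ : Equiv.Perm (Fin n), ⟪e (σ a0), e (σ a0)⟫ with hD
  set C : ℝ := ∑ σ : Equiv.Perm (Fin n), ⟪e (σ a0), e (σ a1)⟫ with hC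
  -- Fact 1 : n * D = n! * S
  have fact1 : (n : ℝ) * D = (n.factorial : ℝ) * S := by
    have h1 : ∑ a : Fin n, ∑ σ : Equiv.Perm (Fin n), ⟪e (σ a), e (σ a)⟫
        = (n : ℝ) * D := by
      rw [Finset.sum_congr rfl fun a _ => diag_inv e a a0, ← hD,
        Finset.sum_const, card_univ, Fintype.card_fin, nsmul_eq_mul]
    have h2 : ∑ a : Fin n, ∑ σ : Equiv.Perm (Fin n), ⟪e (σ a), e (σ a)⟫
        = (n.factorial : ℝ) * S := by
      rw [Finset.sum_comm]
      have key : ∀ σ : Equiv.Perm (Fin n), ∑ a, ⟪e (σ a), e (σ a)⟫ = S := by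
        intro σ
        rw [hS, ← Equiv.sum_comp σ (fun x => ‖e x‖ ^ 2)]
        exact Finset.sum_congr rfl fun a _ => real_inner_self_eq_norm_sq _
      rw [Finset.sum_congr rfl fun σ _ => key σ, Finset.sum_const, card_univ,
        Fintype.card_perm, Fintype.card_fin, nsmul_eq_mul]
    rw [← h1, h2]
  -- Fact 2 : n * D + n*(n-1) * C = n! * L
  have fact2 : (n : ℝ) * D + (n : ℝ) * ((n : ℝ) - 1) * C = (n.factorial : ℝ) * L := by
    have key : ∀ (a : Fin n), ∑ b : Fin n, ∑ σ : Equiv.Perm (Fin n), ⟪e (σ a), e (σ b)⟫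
        = D + ((n : ℝ) - 1) * C := by
      intro a
      rw [← Finset.add_sum_erase _ _ (Finset.mem_univ a)]
      congr 1
      · exact diag_inv e a a0
      · rw [Finset.sum_congr rfl fun b hb => pair_inv e (Finset.ne_of_mem_erase hb).symm h01,
          ← hC, Finset.sum_const, Finset.card_erase_of_mem (Finset.mem_univ a), card_univ,
          Fintype.card_fin, nsmul_eq_mul, Nat.cast_sub (by omega), Nat.cast_one]
    have h1 : ∑ a : Fin n, ∑ b : Fin n, ∑ σ : Equiv.Perm (Fin n), ⟪e (σ a), e (σ b)⟫
        = (n : ℝ) * (D + ((n : ℝ) - 1) * C) := by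
      rw [Finset.sum_congr rfl fun a _ => key a, Finset.sum_const, card_univ,
        Fintype.card_fin, nsmul_eq_mul]
    have h2 : ∑ a : Fin n, ∑ b : Fin n, ∑ σ : Equiv.Perm (Fin n), ⟪e (σ a), e (σ b)⟫
        = (n.factorial : ℝ) * L := by
      have s1 : ∑ a : Fin n, ∑ b : Fin n, ∑ σ : Equiv.Perm (Fin n), ⟪e (σ a), e (σ b)⟫
          = ∑ a : Fin n, ∑ σ : Equiv.Perm (Fin n), ∑ b : Fin n, ⟪e (σ a), e (σ b)⟫ :=
        Finset.sum_congr rfl fun a _ => Finset.sum_comm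
      rw [s1, Finset.sum_comm]
      have key2 : ∀ σ : Equiv.Perm (Fin n), ∑ a : Fin n, ∑ b : Fin n, ⟪e (σ a), e (σ b)⟫ = L := by
        intro σ
        rw [hL, expand (fun j => e j), ← Equiv.sum_comp σ (fun x => ∑ j, ⟪e x, e j⟫)]
        exact Finset.sum_congr rfl fun a _ => (Equiv.sum_comp σ (fun x => ⟪e (σ a), e x⟫))
      rw [Finset.sum_congr rfl fun σ _ => key2 σ, Finset.sum_const, card_univ,
        Fintype.card_perm, Fintype.card_fin, nsmul_eq_mul]
    linear_combination h2 - h1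
  -- Fact 3 : the main sum equals k*D + k*(k-1)*C
  have fact3 : ∑ σ : Equiv.Perm (Fin n), ‖∑ j : Fin k, e (σ (Fin.castLE hkn j))‖ ^ 2
      = (k : ℝ) * (D + ((k : ℝ) - 1) * C) := by
    rw [Finset.sum_congr rfl fun σ _ => expand (fun j => e (σ (Fin.castLE hkn j))),
      Finset.sum_comm]
    have key : ∀ i : Fin k, ∑ σ : Equiv.Perm (Fin n),
        ∑ j : Fin k, ⟪e (σ (Fin.castLE hkn i)), e (σ (Fin.castLE hkn j))⟫
        = D + ((k : ℝ) - 1) * C := by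
      intro i
      rw [Finset.sum_comm, ← Finset.add_sum_erase _ _ (Finset.mem_univ i)]
      congr 1
      · exact diag_inv e _ a0
      · rw [Finset.sum_congr rfl fun j hj => pair_inv e
            (fun h => (Finset.ne_of_mem_erase hj) ((Fin.castLE_injective hkn) h).symm) h01,
          ← hC, Finset.sum_const, Finset.card_erase_of_mem (Finset.mem_univ i), card_univ,
          Fintype.card_fin, nsmul_eq_mul, Nat.cast_sub (by omega), Nat.cast_one]
    rw [Finset.sum_congr rfl fun i _ => key i, Finset.sum_const, card_univ,
      Fintype.card_fin, nsmul_eq_mul]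
  -- Finish by algebra
  have hDval : D = (n.factorial : ℝ) * S / n := by
    rw [eq_div_iff hn0]; linear_combination fact1
  have hCval : C = ((n.factorial : ℝ) * L - (n.factorial : ℝ) * S) / ((n : ℝ) * ((n : ℝ) - 1)) := by
    rw [eq_div_iff (mul_ne_zero hn0 hn1)]; linear_combination fact2 - fact1
  rw [fact3, hDval, hCval]
  field_simp
  ring
end

section
/- Let n ≥ 2, let d ≥ 1, let e : Fin n → EuclideanSpace ℝ (Fin d) be any list of n edge vectors, and let ℓ = ‖∑ j, e j‖. For a permutation σ of Fin n define the n+1 vertices v_0 = 0 and v_m = ∑_{j=0}^{m-1} e(σ j) for 1 ≤ m ≤ n, and define Gyradius(σ) = (1/(2(n+1)²)) · ∑_{i=0}^{n} ∑_{j=0}^{n} ‖v_i − v_j‖². Then the average over all n! permutations satisfies (1/n!) · ∑_{σ ∈ Perm(Fin n)} Gyradius(σ) = ((n+2)/(12(n+1))) · ( ∑ j, ‖e j‖² + ℓ² ). -/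
open Finset RealInnerProductSpace

section Aux

lemma sGyr_gauss1 (N : ℕ) : ∑ i ∈ range N, (i:ℝ) = N*(N-1)/2 := by
  induction N with
  | zero => simp
  | succ k ih => rw [sum_range_succ, ih]; push_cast; ring

lemma sGyr_gauss2 (N : ℕ) : ∑ i ∈ range N, (i:ℝ)^2 = N*(N-1)*(2*N-1)/6 := by
  induction N with
  | zero => simp
  | succ k ih => rw [sum_range_succ, ih]; push_cast; ring

variable {n : ℕ}

lemma sGyr_perm_shift2 (F : Fin n → Fin n → ℝ) {m m' μ μ' : Fin n}
    (h : m ≠ m') (h2 : μ ≠ μ') :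
    ∑ σ : Equiv.Perm (Fin n), F (σ m) (σ m')
      = ∑ σ : Equiv.Perm (Fin n), F (σ μ) (σ μ') := by
  set τ : Equiv.Perm (Fin n) :=
    Equiv.swap (Equiv.swap μ m μ') m' * Equiv.swap μ m with hτ
  have hx : Equiv.swap μ m μ' ≠ m := by
    have : Equiv.swap μ m μ' ≠ Equiv.swap μ m μ :=
      fun hc => h2 ((Equiv.swap μ m).injective hc.symm)
    simpa [Equiv.swap_apply_left] using this
  have hτμ : τ μ = m := by
    simp only [hτ, Equiv.Perm.mul_apply, Equiv.swap_apply_left]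
    exact Equiv.swap_apply_of_ne_of_ne hx.symm h
  have hτμ' : τ μ' = m' := by
    simp only [hτ, Equiv.Perm.mul_apply, Equiv.swap_apply_left]
  refine Fintype.sum_equiv (Equiv.mulRight τ) _ _ (fun σ => ?_)
  simp [Equiv.Perm.mul_apply, hτμ, hτμ']

lemma sGyr_perm_shift (g : Fin n → ℝ) (m μ : Fin n) :
    ∑ σ : Equiv.Perm (Fin n), g (σ m) = ∑ σ : Equiv.Perm (Fin n), g (σ μ) := by
  refine Fintype.sum_equiv (Equiv.mulRight (Equiv.swap μ m)) _ _ (fun σ => ?_)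
  simp [Equiv.Perm.mul_apply]

lemma sGyr_perm_avg_diag (hn : 1 ≤ n) (g : Fin n → ℝ) (m : Fin n) :
    ∑ σ : Equiv.Perm (Fin n), g (σ m) = ((n-1).factorial : ℝ) * ∑ a, g a := by
  have key : (n : ℝ) * ∑ σ : Equiv.Perm (Fin n), g (σ m)
      = (n.factorial : ℝ) * ∑ a, g a := by
    calc (n : ℝ) * ∑ σ : Equiv.Perm (Fin n), g (σ m)
        = ∑ μ : Fin n, ∑ σ : Equiv.Perm (Fin n), g (σ μ) := by
          rw [Finset.sum_congr rfl (fun μ _ => (sGyr_perm_shift g μ m))]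
          simp [mul_comm]
      _ = ∑ σ : Equiv.Perm (Fin n), ∑ μ : Fin n, g (σ μ) := Finset.sum_comm
      _ = ∑ σ : Equiv.Perm (Fin n), ∑ a, g a :=
          Finset.sum_congr rfl (fun σ _ => Equiv.sum_comp σ g)
      _ = (n.factorial : ℝ) * ∑ a, g a := by
          simp [Finset.card_univ, Fintype.card_perm]
  have hfac : (n.factorial : ℝ) = n * ((n-1).factorial : ℝ) := by
    obtain ⟨k, rfl⟩ := Nat.exists_eq_add_of_le hn
    rw [Nat.add_comm 1 k, Nat.add_sub_cancel, Nat.factorial_succ]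
    push_cast; ring
  have hn0 : (n : ℝ) ≠ 0 := by positivity
  exact mul_left_cancel₀ hn0 (key.trans (by rw [hfac]; ring))

lemma sGyr_perm_avg_off (hn : 2 ≤ n) (F : Fin n → Fin n → ℝ) {m m' : Fin n}
    (h : m ≠ m') :
    ∑ σ : Equiv.Perm (Fin n), F (σ m) (σ m')
      = ((n-2).factorial : ℝ) * ((∑ a, ∑ b, F a b) - ∑ a, F a a) := by
  set E := ∑ σ : Equiv.Perm (Fin n), F (σ m) (σ m') with hE
  set Q := ∑ a, F a a with hQ
  set S := ∑ a, ∑ b, F a b with hS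
  have hn1 : 1 ≤ n := le_trans one_le_two hn
  have h1 : ∀ σ : Equiv.Perm (Fin n), ∑ μ, ∑ μ', F (σ μ) (σ μ') = S := by
    intro σ
    calc ∑ μ, ∑ μ', F (σ μ) (σ μ') = ∑ μ, ∑ b, F (σ μ) b :=
          Finset.sum_congr rfl (fun μ _ => Equiv.sum_comp σ (F (σ μ)))
      _ = S := Equiv.sum_comp σ (fun a => ∑ b, F a b)
  have hU1 : ∑ μ : Fin n, ∑ μ' : Fin n, (∑ σ : Equiv.Perm (Fin n), F (σ μ) (σ μ'))
      = (n.factorial : ℝ) * S := by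
    calc ∑ μ : Fin n, ∑ μ' : Fin n, (∑ σ : Equiv.Perm (Fin n), F (σ μ) (σ μ'))
        = ∑ μ : Fin n, ∑ σ : Equiv.Perm (Fin n), ∑ μ' : Fin n, F (σ μ) (σ μ') :=
          Finset.sum_congr rfl (fun μ _ => Finset.sum_comm)
      _ = ∑ σ : Equiv.Perm (Fin n), ∑ μ : Fin n, ∑ μ' : Fin n, F (σ μ) (σ μ') :=
          Finset.sum_comm
      _ = ∑ _σ : Equiv.Perm (Fin n), S := Finset.sum_congr rfl (fun σ _ => h1 σ)
      _ = (n.factorial : ℝ) * S := by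
          simp [Finset.card_univ, Fintype.card_perm]
  have h2 : ∀ μ μ' : Fin n, (∑ σ : Equiv.Perm (Fin n), F (σ μ) (σ μ'))
      = if μ = μ' then ((n-1).factorial : ℝ) * Q else E := by
    intro μ μ'
    by_cases hc : μ = μ'
    · subst hc
      rw [if_pos rfl]
      exact sGyr_perm_avg_diag hn1 (fun a => F a a) μ
    · rw [if_neg hc]
      exact (sGyr_perm_shift2 F h hc).symm
  have hU2 : ∑ μ : Fin n, ∑ μ' : Fin n, (∑ σ : Equiv.Perm (Fin n), F (σ μ) (σ μ'))
      = (n : ℝ) * (((n-1).factorial : ℝ) * Q) + ((n : ℝ) * ((n : ℝ) - 1)) * E := by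
    have hinner : ∀ μ : Fin n, ∑ μ' : Fin n, (∑ σ : Equiv.Perm (Fin n), F (σ μ) (σ μ'))
        = (n : ℝ) * E + (((n-1).factorial : ℝ) * Q - E) := by
      intro μ
      rw [Finset.sum_congr rfl (fun μ' _ => h2 μ μ')]
      have hsplit : ∀ μ' : Fin n, (if μ = μ' then ((n-1).factorial : ℝ) * Q else E)
          = E + (if μ = μ' then ((n-1).factorial : ℝ) * Q - E else 0) := by
        intro μ'; split_ifs <;> ring
      rw [Finset.sum_congr rfl (fun μ' _ => hsplit μ'), Finset.sum_add_distrib,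
        Finset.sum_ite_eq univ μ (fun _ => ((n-1).factorial : ℝ) * Q - E)]
      simp [Finset.card_univ, mul_comm]
    rw [Finset.sum_congr rfl (fun μ _ => hinner μ)]
    simp [Finset.card_univ]
    ring
  have hfac1 : ((n-1).factorial : ℝ) = ((n : ℝ) - 1) * ((n-2).factorial : ℝ) := by
    obtain ⟨k, rfl⟩ := Nat.exists_eq_add_of_le hn
    rw [Nat.add_comm 2 k]
    have e1 : k + 2 - 1 = k + 1 := rfl
    have e2 : k + 2 - 2 = k := rfl
    rw [e1, e2, Nat.factorial_succ]
    push_cast; ring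
  have hfac2 : (n.factorial : ℝ) = (n : ℝ) * ((n : ℝ) - 1) * ((n-2).factorial : ℝ) := by
    obtain ⟨k, rfl⟩ := Nat.exists_eq_add_of_le hn
    rw [Nat.add_comm 2 k]
    have e2 : k + 2 - 2 = k := rfl
    rw [e2, show k + 2 = (k+1)+1 from rfl, Nat.factorial_succ, Nat.factorial_succ]
    push_cast; ring
  have hne : (n : ℝ) * ((n : ℝ) - 1) ≠ 0 := by
    have h2' : (2 : ℝ) ≤ (n : ℝ) := by exact_mod_cast hn
    have : (0:ℝ) < (n : ℝ) * ((n : ℝ) - 1) := by nlinarith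
    exact ne_of_gt this
  apply mul_left_cancel₀ hne
  have hkey := hU1.symm.trans hU2
  rw [hfac2] at hkey
  rw [hfac1] at hkey
  linarith [hkey]

lemma sGyr_sumIJ (N : ℕ) :
    ∑ i ∈ range N, ∑ j ∈ range N, ((i:ℝ) - j)^2 = (N:ℝ)^2*((N:ℝ)-1)*((N:ℝ)+1)/6 := by
  have inner : ∀ i : ℕ, ∑ j ∈ range N, ((i:ℝ) - j)^2
      = (N:ℝ)*(i:ℝ)^2 - 2*(i:ℝ)*((N:ℝ)*((N:ℝ)-1)/2) + (N:ℝ)*((N:ℝ)-1)*(2*(N:ℝ)-1)/6 := by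
    intro i
    have expand : ∀ j : ℕ, ((i:ℝ) - j)^2 = (i:ℝ)^2 - 2*(i:ℝ)*(j:ℝ) + (j:ℝ)^2 :=
      fun j => by ring
    rw [Finset.sum_congr rfl fun j _ => expand j, Finset.sum_add_distrib,
      Finset.sum_sub_distrib, ← Finset.mul_sum, Finset.sum_const, Finset.card_range,
      sGyr_gauss1, sGyr_gauss2, nsmul_eq_mul]
    try ring
  rw [Finset.sum_congr rfl fun i _ => inner i, Finset.sum_add_distrib,
    Finset.sum_sub_distrib, ← Finset.mul_sum, ← Finset.sum_mul, ← Finset.mul_sum,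
    Finset.sum_const, Finset.card_range, sGyr_gauss1, sGyr_gauss2, nsmul_eq_mul]
  try ring

lemma sGyr_diagsum (n : ℕ) :
    ∑ m ∈ range n, (2*((n:ℝ)+1)*((n:ℝ) - m) - 2*((n:ℝ) - m)^2)
      = (n:ℝ)*((n:ℝ)+1)*((n:ℝ)+2)/3 := by
  have expand : ∀ m : ℕ, 2*((n:ℝ)+1)*((n:ℝ) - m) - 2*((n:ℝ) - m)^2
      = (2*((n:ℝ)+1)*(n:ℝ) - 2*(n:ℝ)^2) + (2*(n:ℝ) - 2)*(m:ℝ) + (-2)*(m:ℝ)^2 :=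
    fun m => by ring
  rw [Finset.sum_congr rfl fun m _ => expand m]
  simp only [Finset.sum_add_distrib]
  rw [← Finset.mul_sum, ← Finset.mul_sum, Finset.sum_const, Finset.card_range,
    sGyr_gauss1, sGyr_gauss2, nsmul_eq_mul]
  ring

end Aux

/-- The average over all rearrangements of a set of `n` edges of the radius of gyration of the
resulting open polygon (with `n+1` vertices given by partial sums starting at the origin):
`sGyradius(𝒫) = ((n+2)/(12(n+1))) · (∑‖eⱼ‖² + ℓ²)`. -/
theorem sGyradius_open_formula (n d : ℕ) (hn : 2 ≤ n) (hd : 1 ≤ d)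
    (e : Fin n → EuclideanSpace ℝ (Fin d)) :
    (1 / (n.factorial : ℝ)) *
        ∑ σ : Equiv.Perm (Fin n),
          (1 / (2 * ((n : ℝ) + 1) ^ 2)) *
            ∑ i : Fin (n + 1), ∑ j : Fin (n + 1),
              ‖(∑ m : Fin n, if (m : ℕ) < (i : ℕ) then e (σ m) else 0)
                - (∑ m : Fin n, if (m : ℕ) < (j : ℕ) then e (σ m) else 0)‖ ^ 2
      = (((n : ℝ) + 2) / (12 * ((n : ℝ) + 1))) * ((∑ j, ‖e j‖ ^ 2) + ‖∑ j, e j‖ ^ 2) := by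
  classical
  have hn1 : 1 ≤ n := le_trans one_le_two hn
  set ip : Fin n → Fin n → ℝ := fun a b => ⟪e a, e b⟫ with hip
  set c : Fin n → Fin (n+1) → ℝ := fun m i => if (m:ℕ) < (i:ℕ) then 1 else 0 with hcdef
  set K : Fin n → Fin n → ℝ := fun m m' =>
    ∑ i : Fin (n+1), ∑ j : Fin (n+1), (c m i - c m j) * (c m' i - c m' j) with hKdef
  set Q := ∑ a, ip a a with hQdef
  set L := ∑ a, ∑ b, ip a b with hLdef
  -- Step 1: rewrite each squared distance via inner products
  have hnorm : ∀ (σ : Equiv.Perm (Fin n)) (i j : Fin (n+1)),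
      ‖(∑ m : Fin n, if (m : ℕ) < (i : ℕ) then e (σ m) else 0)
        - (∑ m : Fin n, if (m : ℕ) < (j : ℕ) then e (σ m) else 0)‖ ^ 2
      = ∑ m, ∑ m', (c m i - c m j) * (c m' i - c m' j) * ip (σ m) (σ m') := by
    intro σ i j
    have hv : (∑ m : Fin n, if (m : ℕ) < (i : ℕ) then e (σ m) else 0)
        - (∑ m : Fin n, if (m : ℕ) < (j : ℕ) then e (σ m) else 0)
        = ∑ m : Fin n, (c m i - c m j) • e (σ m) := by
      rw [← Finset.sum_sub_distrib]
      refine Finset.sum_congr rfl fun m _ => ?_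
      simp only [hcdef, sub_smul, ite_smul, one_smul, zero_smul]
    rw [hv, ← real_inner_self_eq_norm_sq, sum_inner]
    refine Finset.sum_congr rfl fun m _ => ?_
    rw [inner_sum]
    refine Finset.sum_congr rfl fun m' _ => ?_
    rw [real_inner_smul_left, real_inner_smul_right]
    simp only [hip]
    ring
  -- Step 2: per permutation
  have hsum1 : ∀ σ : Equiv.Perm (Fin n),
      (∑ i : Fin (n + 1), ∑ j : Fin (n + 1),
        ‖(∑ m : Fin n, if (m : ℕ) < (i : ℕ) then e (σ m) else 0)
          - (∑ m : Fin n, if (m : ℕ) < (j : ℕ) then e (σ m) else 0)‖ ^ 2)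
      = ∑ m, ∑ m', K m m' * ip (σ m) (σ m') := by
    intro σ
    rw [Finset.sum_congr rfl (fun i _ => Finset.sum_congr rfl (fun j _ => hnorm σ i j))]
    calc ∑ i : Fin (n+1), ∑ j : Fin (n+1), ∑ m, ∑ m',
          (c m i - c m j) * (c m' i - c m' j) * ip (σ m) (σ m')
        = ∑ i : Fin (n+1), ∑ m, ∑ j : Fin (n+1), ∑ m',
            (c m i - c m j) * (c m' i - c m' j) * ip (σ m) (σ m') :=
          Finset.sum_congr rfl (fun i _ => Finset.sum_comm)
      _ = ∑ m, ∑ i : Fin (n+1), ∑ j : Fin (n+1), ∑ m',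
            (c m i - c m j) * (c m' i - c m' j) * ip (σ m) (σ m') := Finset.sum_comm
      _ = ∑ m, ∑ i : Fin (n+1), ∑ m', ∑ j : Fin (n+1),
            (c m i - c m j) * (c m' i - c m' j) * ip (σ m) (σ m') :=
          Finset.sum_congr rfl (fun m _ => Finset.sum_congr rfl (fun i _ => Finset.sum_comm))
      _ = ∑ m, ∑ m', ∑ i : Fin (n+1), ∑ j : Fin (n+1),
            (c m i - c m j) * (c m' i - c m' j) * ip (σ m) (σ m') :=
          Finset.sum_congr rfl (fun m _ => Finset.sum_comm)
      _ = ∑ m, ∑ m', K m m' * ip (σ m) (σ m') := by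
          refine Finset.sum_congr rfl fun m _ => Finset.sum_congr rfl fun m' _ => ?_
          rw [hKdef]
          simp only
          rw [Finset.sum_mul]
          refine Finset.sum_congr rfl fun i _ => ?_
          rw [Finset.sum_mul]
  -- Step 3: sum over permutations
  have hsum2 : (∑ σ : Equiv.Perm (Fin n), ∑ m, ∑ m', K m m' * ip (σ m) (σ m'))
      = ∑ m, ∑ m', K m m' * (∑ σ : Equiv.Perm (Fin n), ip (σ m) (σ m')) := by
    rw [Finset.sum_comm]
    refine Finset.sum_congr rfl fun m _ => ?_
    rw [Finset.sum_comm]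
    refine Finset.sum_congr rfl fun m' _ => ?_
    rw [Finset.mul_sum]
  -- averages of inner products over permutations
  have hT : ∀ m m' : Fin n, (∑ σ : Equiv.Perm (Fin n), ip (σ m) (σ m'))
      = if m = m' then ((n-1).factorial : ℝ) * Q else ((n-2).factorial : ℝ) * (L - Q) := by
    intro m m'
    by_cases hc : m = m'
    · subst hc; rw [if_pos rfl]
      exact sGyr_perm_avg_diag hn1 (fun a => ip a a) m
    · rw [if_neg hc]
      exact sGyr_perm_avg_off hn ip hc
  -- Step 4: split into diagonal and off-diagonal contributions
  have hsum3 : (∑ m, ∑ m', K m m' * (∑ σ : Equiv.Perm (Fin n), ip (σ m) (σ m')))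
      = ((n-2).factorial : ℝ) * (L - Q) * (∑ m, ∑ m', K m m')
        + (((n-1).factorial : ℝ) * Q - ((n-2).factorial : ℝ) * (L - Q)) * (∑ m, K m m) := by
    rw [Finset.sum_congr rfl (fun m _ => Finset.sum_congr rfl (fun m' _ => by rw [hT m m']))]
    have hsplit : ∀ m m' : Fin n,
        K m m' * (if m = m' then ((n-1).factorial : ℝ) * Q else ((n-2).factorial : ℝ) * (L - Q))
        = ((n-2).factorial : ℝ) * (L - Q) * K m m'
          + (if m = m' then
              (((n-1).factorial : ℝ) * Q - ((n-2).factorial : ℝ) * (L - Q)) * K m m' else 0) := by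
      intro m m'; split_ifs <;> ring
    rw [Finset.sum_congr rfl (fun m _ => Finset.sum_congr rfl (fun m' _ => hsplit m m'))]
    simp only [Finset.sum_add_distrib]
    congr 1
    · rw [Finset.mul_sum]
      exact Finset.sum_congr rfl fun m _ => by rw [Finset.mul_sum]
    · simp only [Finset.sum_ite_eq, Finset.mem_univ, if_true, Finset.mul_sum]
  -- column sums of the indicator matrix
  have hcol : ∀ i : Fin (n+1), (∑ m : Fin n, c m i) = ((i:ℕ) : ℝ) := by
    intro i
    simp only [hcdef]
    rw [Fin.sum_univ_eq_sum_range (fun m => if m < (i:ℕ) then (1:ℝ) else 0) n]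
    rw [Finset.sum_boole]
    have : (range n).filter (fun m => m < (i:ℕ)) = range (i:ℕ) := by
      ext x
      simp only [Finset.mem_filter, Finset.mem_range]
      have := i.isLt
      omega
    rw [this, Finset.card_range]
  have hrow : ∀ m : Fin n, (∑ i : Fin (n+1), c m i) = (n : ℝ) - ((m:ℕ) : ℝ) := by
    intro m
    simp only [hcdef]
    rw [Fin.sum_univ_eq_sum_range (fun i => if (m:ℕ) < i then (1:ℝ) else 0) (n+1)]
    rw [Finset.sum_boole]
    have : (range (n+1)).filter (fun i => (m:ℕ) < i) = Finset.Ico ((m:ℕ)+1) (n+1) := by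
      ext x
      simp only [Finset.mem_filter, Finset.mem_range, Finset.mem_Ico]
      omega
    rw [this, Nat.card_Ico]
    have hm := m.isLt
    have : n + 1 - ((m:ℕ) + 1) = n - (m:ℕ) := by omega
    rw [this, Nat.cast_sub (le_of_lt hm)]
  -- combinatorial sums
  have hKfull : (∑ m, ∑ m', K m m')
      = (n:ℝ) * ((n:ℝ)+1)^2 * ((n:ℝ)+2) / 6 := by
    have step : (∑ m, ∑ m', K m m')
        = ∑ i : Fin (n+1), ∑ j : Fin (n+1), (((i:ℕ):ℝ) - ((j:ℕ):ℝ))^2 := by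
      calc ∑ m, ∑ m', K m m'
          = ∑ m, ∑ i : Fin (n+1), ∑ j : Fin (n+1), (c m i - c m j) * (∑ m', (c m' i - c m' j)) := by
            refine Finset.sum_congr rfl fun m _ => ?_
            rw [hKdef]
            simp only
            rw [Finset.sum_comm]
            refine Finset.sum_congr rfl fun i _ => ?_
            rw [Finset.sum_comm]
            refine Finset.sum_congr rfl fun j _ => ?_
            rw [Finset.mul_sum]
        _ = ∑ i : Fin (n+1), ∑ j : Fin (n+1), (∑ m, (c m i - c m j)) * (∑ m', (c m' i - c m' j)) := by
            rw [Finset.sum_comm]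
            refine Finset.sum_congr rfl fun i _ => ?_
            rw [Finset.sum_comm]
            refine Finset.sum_congr rfl fun j _ => ?_
            rw [Finset.sum_mul]
        _ = ∑ i : Fin (n+1), ∑ j : Fin (n+1), (((i:ℕ):ℝ) - ((j:ℕ):ℝ))^2 := by
            refine Finset.sum_congr rfl fun i _ => Finset.sum_congr rfl fun j _ => ?_
            rw [Finset.sum_sub_distrib, hcol i, hcol j]
            ring
    rw [step]
    calc ∑ i : Fin (n+1), ∑ j : Fin (n+1), (((i:ℕ):ℝ) - ((j:ℕ):ℝ))^2
        = ∑ i : Fin (n+1), ∑ j ∈ range (n+1), (((i:ℕ):ℝ) - (j:ℝ))^2 :=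
          Finset.sum_congr rfl fun i _ =>
            Fin.sum_univ_eq_sum_range (fun j => (((i:ℕ):ℝ) - (j:ℝ))^2) (n+1)
      _ = ∑ i ∈ range (n+1), ∑ j ∈ range (n+1), ((i:ℝ) - (j:ℝ))^2 :=
          Fin.sum_univ_eq_sum_range (fun i => ∑ j ∈ range (n+1), ((i:ℝ) - (j:ℝ))^2) (n+1)
      _ = (n:ℝ) * ((n:ℝ)+1)^2 * ((n:ℝ)+2) / 6 := by
          rw [sGyr_sumIJ (n+1)]
          push_cast
          try ring
  have hKdiag : (∑ m, K m m) = (n:ℝ) * ((n:ℝ)+1) * ((n:ℝ)+2) / 3 := by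
    have step : ∀ m : Fin n, K m m
        = 2*((n:ℝ)+1)*((n:ℝ) - ((m:ℕ):ℝ)) - 2*((n:ℝ) - ((m:ℕ):ℝ))^2 := by
      intro m
      have hcc : ∀ i : Fin (n+1), c m i * c m i = c m i := by
        intro i; simp only [hcdef]; split_ifs <;> ring
      have inner : ∀ i : Fin (n+1), ∑ j : Fin (n+1), (c m i - c m j) * (c m i - c m j)
          = (((n:ℝ)+1) - 2*((n:ℝ) - ((m:ℕ):ℝ))) * c m i + ((n:ℝ) - ((m:ℕ):ℝ)) := by
        intro i
        have expand : ∀ j : Fin (n+1), (c m i - c m j) * (c m i - c m j)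
            = c m i - 2 * c m i * c m j + c m j := by
          intro j; linear_combination hcc i + hcc j
        rw [Finset.sum_congr rfl fun j _ => expand j, Finset.sum_add_distrib,
          Finset.sum_sub_distrib, ← Finset.mul_sum, hrow m, Finset.sum_const,
          Finset.card_univ, Fintype.card_fin, nsmul_eq_mul]
        push_cast
        ring
      rw [hKdef]
      simp only
      rw [Finset.sum_congr rfl fun i _ => inner i, Finset.sum_add_distrib,
        ← Finset.mul_sum, hrow m, Finset.sum_const, Finset.card_univ, Fintype.card_fin,
        nsmul_eq_mul]
      push_cast
      ring
    rw [Finset.sum_congr rfl fun m _ => step m]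
    rw [Fin.sum_univ_eq_sum_range
      (fun m => 2*((n:ℝ)+1)*((n:ℝ) - (m:ℝ)) - 2*((n:ℝ) - (m:ℝ))^2) n]
    exact sGyr_diagsum n
  -- identify Q and L with the data in the statement
  have hQ' : (∑ j, ‖e j‖ ^ 2) = Q := by
    rw [hQdef]
    exact Finset.sum_congr rfl fun a _ => (real_inner_self_eq_norm_sq (e a)).symm
  have hL' : ‖∑ j, e j‖ ^ 2 = L := by
    rw [hLdef, ← real_inner_self_eq_norm_sq, sum_inner]
    exact Finset.sum_congr rfl fun a _ => inner_sum _ _ _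
  -- assemble
  rw [Finset.sum_congr rfl (fun σ (_ : σ ∈ univ) => by rw [hsum1 σ])]
  rw [← Finset.mul_sum, hsum2, hsum3, hKfull, hKdiag, ← hQ', ← hL']
  -- final scalar computation
  have hfac1 : ((n-1).factorial : ℝ) = ((n : ℝ) - 1) * ((n-2).factorial : ℝ) := by
    obtain ⟨k, rfl⟩ := Nat.exists_eq_add_of_le hn
    rw [Nat.add_comm 2 k]
    have e1 : k + 2 - 1 = k + 1 := rfl
    have e2 : k + 2 - 2 = k := rfl
    rw [e1, e2, Nat.factorial_succ]
    push_cast; ring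
  have hfac2 : (n.factorial : ℝ) = (n : ℝ) * ((n : ℝ) - 1) * ((n-2).factorial : ℝ) := by
    obtain ⟨k, rfl⟩ := Nat.exists_eq_add_of_le hn
    rw [Nat.add_comm 2 k]
    have e2 : k + 2 - 2 = k := rfl
    rw [e2, show k + 2 = (k+1)+1 from rfl, Nat.factorial_succ, Nat.factorial_succ]
    push_cast; ring
  rw [hfac1, hfac2]
  have hnR : (2:ℝ) ≤ (n:ℝ) := by exact_mod_cast hn
  have h1 : (n:ℝ) ≠ 0 := by positivity
  have h2 : (n:ℝ) - 1 ≠ 0 := by intro h; nlinarith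
  have h3 : (n:ℝ) + 1 ≠ 0 := by positivity
  have h4 : ((n-2).factorial : ℝ) ≠ 0 := by
    exact_mod_cast Nat.factorial_ne_zero (n-2)
  field_simp
  ring
end

section
/- Let n ≥ 2, let d ≥ 1, and let e : Fin n → EuclideanSpace ℝ (Fin d) be a list of n edge vectors with ∑ j, e j = 0 (a closed polygon). For a permutation σ of Fin n define the n vertices v_0 = 0 and v_m = ∑_{j=0}^{m-1} e(σ j) for 1 ≤ m ≤ n−1, and define Gyradius(σ) = (1/(2n²)) · ∑_{i=0}^{n-1} ∑_{j=0}^{n-1} ‖v_i − v_j‖². Then the average over all n! permutations satisfies (1/n!) · ∑_{σ ∈ Perm(Fin n)} Gyradius(σ) = ((n+1)/(12n)) · ∑ j, ‖e j‖². -/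
open Finset Equiv
open scoped Nat RealInnerProductSpace

/-!
Averaged over all permutations `σ`, the Gram matrix `⟪e (σ a), e (σ b)⟫` is invariant under the
2-transitive action of the permutation group, so it takes one value on the diagonal,
`(n-1)! ∑ ‖e x‖²`, and one off it, which closure (every row sums to zero) forces to be
`-(n-2)! ∑ ‖e x‖²`. Since `v i - v j = ∑ m, c m • e (σ m)` with `c m = [m < i] - [m < j]`, the
average of `‖v i - v j‖²` only involves `∑ c m²` and `(∑ c m)² = (i - j)²`, whose sums over all
`i, j` are `n (n² - 1) / 3` and `n² (n² - 1) / 6`.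
-/

theorem sum_sum_sub_sq {ι : Type*} [Fintype ι] (f : ι → ℝ) :
    ∑ i, ∑ j, (f i - f j) ^ 2 = 2 * Fintype.card ι * ∑ i, f i ^ 2 - 2 * (∑ i, f i) ^ 2 := by
  simp only [sub_sq, sum_add_distrib, sum_sub_distrib, sum_const, card_univ, nsmul_eq_mul,
    ← mul_sum, ← sum_mul, mul_assoc]
  ring

theorem sum_fin_val (n : ℕ) : ∑ i : Fin n, (i : ℝ) = n * (n - 1) / 2 := by
  induction n with
  | zero => simp
  | succ n ih => rw [Fin.sum_univ_castSucc]; simp [ih]; ring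

theorem sum_fin_val_sq (n : ℕ) : ∑ i : Fin n, (i : ℝ) ^ 2 = n * (n - 1) * (2 * n - 1) / 6 := by
  induction n with
  | zero => simp
  | succ n ih => rw [Fin.sum_univ_castSucc]; simp [ih]; ring

theorem Fin.sum_boole_lt {n : ℕ} (i : Fin n) :
    ∑ m : Fin n, (if m < i then (1 : ℝ) else 0) = i := by
  rw [sum_boole, filter_gt_eq_Iio, Fin.card_Iio]

theorem Fin.sum_boole_gt {n : ℕ} (m : Fin n) :
    ∑ i : Fin n, (if m < i then (1 : ℝ) else 0) = m.rev := by
  rw [sum_boole, filter_lt_eq_Ioi, Fin.card_Ioi, Fin.val_rev]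
  congr 1
  omega

section Perm

variable {α : Type*} [Fintype α] [DecidableEq α]

theorem sum_perm_apply_eq {M : Type*} [AddCommMonoid M] (g : α → M) (a a' : α) :
    ∑ σ : Perm α, g (σ a) = ∑ σ : Perm α, g (σ a') := by
  rw [← Equiv.sum_comp (Equiv.mulRight (swap a a'))]
  simp

theorem sum_perm_apply_apply_eq_of_ne {M : Type*} [AddCommMonoid M] (g : α → α → M)
    {a b a' b' : α} (hab : a ≠ b) (hab' : a' ≠ b') :
    ∑ σ : Perm α, g (σ a) (σ b) = ∑ σ : Perm α, g (σ a') (σ b') := by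
  obtain ⟨π, ha, hb⟩ :=
    MulAction.is_two_pretransitive_iff.mp (Perm.isMultiplyPretransitive α 2) hab hab'
  rw [← Equiv.sum_comp (Equiv.mulRight π)]
  simp [← ha, ← hb]

theorem sum_perm_apply (g : α → ℝ) (a : α) :
    ∑ σ : Perm α, g (σ a) = (Fintype.card α - 1)! * ∑ x, g x := by
  have hcard : Fintype.card α ≠ 0 := (Fintype.card_pos_iff.mpr ⟨a⟩).ne'
  have h : (Fintype.card α : ℝ) * ∑ σ : Perm α, g (σ a)
      = (Fintype.card α : ℝ) * ((Fintype.card α - 1)! * ∑ x, g x) := by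
    calc (Fintype.card α : ℝ) * ∑ σ : Perm α, g (σ a)
        = ∑ a' : α, ∑ σ : Perm α, g (σ a') := by
          simp [sum_perm_apply_eq g _ a]
      _ = ∑ σ : Perm α, ∑ x, g x := by
          rw [sum_comm]
          exact sum_congr rfl fun σ _ => Equiv.sum_comp σ g
      _ = (Fintype.card α : ℝ) * ((Fintype.card α - 1)! * ∑ x, g x) := by
          rw [sum_const, Finset.card_univ, Fintype.card_perm, nsmul_eq_mul, ← mul_assoc,
            ← Nat.cast_mul, Nat.mul_factorial_pred hcard]
  exact mul_left_cancel₀ (Nat.cast_ne_zero.mpr hcard) h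

variable {E : Type*} [NormedAddCommGroup E] [InnerProductSpace ℝ E]

theorem sum_perm_inner_apply_apply_of_ne {e : α → E} (he : ∑ x, e x = 0) {a b : α}
    (hab : a ≠ b) :
    ∑ σ : Perm α, ⟪e (σ a), e (σ b)⟫ = -((Fintype.card α - 2)! * ∑ x, ‖e x‖ ^ 2) := by
  obtain ⟨k, hk⟩ : ∃ k, Fintype.card α = k + 2 :=
    ⟨Fintype.card α - 2, by have := Fintype.one_lt_card_iff.mpr ⟨a, b, hab⟩; omega⟩
  have hrow : ∀ σ : Perm α, ∑ b', ⟪e (σ a), e (σ b')⟫ = 0 := fun σ => by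
    rw [← inner_sum, Equiv.sum_comp σ e, he, inner_zero_right]
  have hsplit : ∑ b' : α, ∑ σ : Perm α, ⟪e (σ a), e (σ b')⟫
      = (k + 1)! * ∑ x, ‖e x‖ ^ 2 + (k + 1) * ∑ σ : Perm α, ⟪e (σ a), e (σ b)⟫ := by
    have hoff : ∀ b' ∈ univ.erase a, ∑ σ : Perm α, ⟪e (σ a), e (σ b')⟫
        = ∑ σ : Perm α, ⟪e (σ a), e (σ b)⟫ := fun b' hb' =>
      sum_perm_apply_apply_eq_of_ne (fun x y => ⟪e x, e y⟫) (ne_of_mem_erase hb').symm hab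
    simp only [← add_sum_erase _ _ (mem_univ a), real_inner_self_eq_norm_sq,
      sum_perm_apply (fun x => ‖e x‖ ^ 2), sum_congr rfl hoff, sum_const, card_erase_of_mem,
      mem_univ, Finset.card_univ, hk, nsmul_eq_mul]
    push_cast
    ring
  rw [sum_comm, sum_eq_zero fun σ _ => hrow σ, Nat.factorial_succ] at hsplit
  rw [hk, Nat.add_sub_cancel]
  push_cast at hsplit
  have hk1 : (k : ℝ) + 1 ≠ 0 := by positivity
  apply mul_left_cancel₀ hk1
  linear_combination -hsplit

theorem norm_sum_smul_sq {ι : Type*} [Fintype ι] (c : ι → ℝ) (x : ι → E) :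
    ‖∑ m, c m • x m‖ ^ 2 = ∑ m, ∑ m', c m * c m' * ⟪x m, x m'⟫ := by
  rw [← real_inner_self_eq_norm_sq, sum_inner]
  simp only [inner_sum, real_inner_smul_left, real_inner_smul_right]
  exact sum_congr rfl fun _ _ => sum_congr rfl fun _ _ => by ring

theorem sum_perm_norm_sum_smul_sq {e : α → E} (he : ∑ x, e x = 0) (c : α → ℝ) :
    ∑ σ : Perm α, ‖∑ m, c m • e (σ m)‖ ^ 2
      = ((Fintype.card α - 1)! * ∑ m, c m ^ 2
          - (Fintype.card α - 2)! * ((∑ m, c m) ^ 2 - ∑ m, c m ^ 2)) * ∑ x, ‖e x‖ ^ 2 := by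
  have hgram : ∀ m m', ∑ σ : Perm α, ⟪e (σ m), e (σ m')⟫
      = (if m = m' then ((Fintype.card α - 1)! + (Fintype.card α - 2)! : ℝ) else 0)
          * ∑ x, ‖e x‖ ^ 2 - (Fintype.card α - 2)! * ∑ x, ‖e x‖ ^ 2 := by
    intro m m'
    rcases eq_or_ne m m' with rfl | hmm
    · simp only [real_inner_self_eq_norm_sq, sum_perm_apply (fun x => ‖e x‖ ^ 2), if_true]
      ring
    · rw [sum_perm_inner_apply_apply_of_ne he hmm, if_neg hmm]
      ring
  calc ∑ σ : Perm α, ‖∑ m, c m • e (σ m)‖ ^ 2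
      = ∑ m, ∑ m', c m * c m' * ∑ σ : Perm α, ⟪e (σ m), e (σ m')⟫ := by
        simp only [norm_sum_smul_sq, mul_sum]
        rw [sum_comm]
        exact sum_congr rfl fun m _ => sum_comm
    _ = _ := by
        simp only [hgram, mul_sub, ite_mul, zero_mul, mul_ite, mul_zero, sum_sub_distrib,
          sum_ite_eq, mem_univ, if_true, ← sum_mul, ← mul_sum, sq]
        ring

end Perm

theorem sum_sum_sum_boole_lt_sub_sq (n : ℕ) :
    ∑ i : Fin n, ∑ j : Fin n, ∑ m : Fin n,
        ((if m < i then (1 : ℝ) else 0) - if m < j then 1 else 0) ^ 2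
      = (n : ℝ) * (n ^ 2 - 1) / 3 := by
  calc _ = ∑ m : Fin n, ∑ i : Fin n, ∑ j : Fin n,
        ((if m < i then (1 : ℝ) else 0) - if m < j then 1 else 0) ^ 2 :=
        (sum_congr rfl fun i _ => sum_comm).trans sum_comm
    _ = ∑ m : Fin n, (2 * n * (m.rev : ℝ) - 2 * (m.rev : ℝ) ^ 2) := by
        refine sum_congr rfl fun m _ => ?_
        rw [sum_sum_sub_sq (fun i : Fin n => if m < i then (1 : ℝ) else 0)]
        simp only [ite_pow, one_pow, ne_eq, OfNat.ofNat_ne_zero, not_false_eq_true, zero_pow,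
          Fin.sum_boole_gt, Fintype.card_fin]
    _ = ∑ m : Fin n, (2 * n * (m : ℝ) - 2 * (m : ℝ) ^ 2) :=
        Equiv.sum_comp Fin.revPerm (fun m : Fin n => 2 * n * (m : ℝ) - 2 * (m : ℝ) ^ 2)
    _ = n * (n ^ 2 - 1) / 3 := by
        rw [sum_sub_distrib, ← mul_sum, ← mul_sum, sum_fin_val, sum_fin_val_sq]
        ring

theorem sum_sum_fin_val_sub_sq (n : ℕ) :
    ∑ i : Fin n, ∑ j : Fin n, ((i : ℝ) - j) ^ 2 = (n : ℝ) ^ 2 * (n ^ 2 - 1) / 6 := by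
  rw [sum_sum_sub_sq (fun i : Fin n => (i : ℝ)), sum_fin_val, sum_fin_val_sq, Fintype.card_fin]
  ring

theorem sGyradius_closed_formula_general (n d : ℕ) (hn : 2 ≤ n)
    (e : Fin n → EuclideanSpace ℝ (Fin d)) (hclosed : ∑ j, e j = 0) :
    (1 / (n.factorial : ℝ)) *
        ∑ σ : Equiv.Perm (Fin n),
          (1 / (2 * (n : ℝ) ^ 2)) *
            ∑ i : Fin n, ∑ j : Fin n,
              ‖(∑ m : Fin n, if (m : ℕ) < (i : ℕ) then e (σ m) else 0)
                - (∑ m : Fin n, if (m : ℕ) < (j : ℕ) then e (σ m) else 0)‖ ^ 2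
      = (((n : ℝ) + 1) / (12 * (n : ℝ))) * ∑ j, ‖e j‖ ^ 2 := by
  have hvertex : ∀ (σ : Perm (Fin n)) (i j : Fin n),
      (∑ m : Fin n, if (m : ℕ) < (i : ℕ) then e (σ m) else 0)
        - (∑ m : Fin n, if (m : ℕ) < (j : ℕ) then e (σ m) else 0)
      = ∑ m, ((if m < i then (1 : ℝ) else 0) - if m < j then 1 else 0) • e (σ m) := by
    intro σ i j
    simp only [← Fin.lt_def, sub_smul, ite_smul, one_smul, zero_smul, sum_sub_distrib]
  simp only [hvertex]
  rw [← mul_sum, sum_comm]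
  simp only [sum_comm (γ := Perm (Fin n)), sum_perm_norm_sum_smul_sq hclosed]
  simp only [← sum_mul, sum_sub_distrib, Fin.sum_boole_lt, ← mul_sum, mul_sub]
  rw [sum_sum_sum_boole_lt_sub_sq, sum_sum_fin_val_sub_sq, Fintype.card_fin]
  obtain ⟨k, rfl⟩ : ∃ k, n = k + 2 := ⟨n - 2, by omega⟩
  rw [show k + 2 - 1 = k + 1 from rfl, Nat.add_sub_cancel, Nat.factorial_succ, Nat.factorial_succ]
  push_cast
  field_simp
  ring

/-- The average over all rearrangements of the edges of a closed polygon of the radius of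
gyration (with `n` vertices given by partial sums starting at the origin):
`sGyradius(𝒫) = ((n+1)/(12n)) · ∑‖eⱼ‖²`. -/
theorem sGyradius_closed_formula (n d : ℕ) (hn : 2 ≤ n) (hd : 1 ≤ d)
    (e : Fin n → EuclideanSpace ℝ (Fin d)) (hclosed : ∑ j, e j = 0) :
    (1 / (n.factorial : ℝ)) *
        ∑ σ : Equiv.Perm (Fin n),
          (1 / (2 * (n : ℝ) ^ 2)) *
            ∑ i : Fin n, ∑ j : Fin n,
              ‖(∑ m : Fin n, if (m : ℕ) < (i : ℕ) then e (σ m) else 0)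
                - (∑ m : Fin n, if (m : ℕ) < (j : ℕ) then e (σ m) else 0)‖ ^ 2
      = (((n : ℝ) + 1) / (12 * (n : ℝ))) * ∑ j, ‖e j‖ ^ 2 :=
  sGyradius_closed_formula_general n d hn e hclosed
end

section
/- Let n ≥ 1 and p ≥ 1 be natural numbers, and let μ be the uniform (rotation-invariant) probability measure on the unit sphere in EuclideanSpace ℝ (Fin (4n)). Then the p-th moment of the first edgelength of a random spatial arm of length 2 satisfies ∫ (2·(x₀² + x₁² + x₂² + x₃²))^p dμ(x) = 2^p · B(p, 2n) / B(p, 2), where x₀, x₁, x₂, x₃ are the first four coordinates of x and B is the Euler Beta function B(a,b) = Γ(a)Γ(b)/Γ(a+b). -/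
open MeasureTheory Real

/-- The Euler Beta function `B(a,b) = Γ(a)Γ(b)/Γ(a+b)`. -/
noncomputable def eulerBeta (a b : ℝ) : ℝ := Real.Gamma a * Real.Gamma b / Real.Gamma (a + b)

/-!
Let `T x = ∑_{i ∈ S} x_i²` on the unit sphere of `ℝ^m` and `s = #S`. For `i ∈ S`, `j ∉ S`,
rotation invariance makes `θ ↦ ∫ (T^k x_i x_j) ∘ R_θ dμ` constant, where `R_θ` rotates the
`(i, j)`-plane; its derivative at `0` gives `∫ T^k (x_i² - x_j²) - 2k T^(k-1) x_i² x_j² dμ = 0`.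
Summing over all such pairs and using `∑_{j ∉ S} x_j² = 1 - T` on the sphere yields
`(m + 2k) E[T^(k+1)] = (s + 2k) E[T^k]`, hence
`E[T^k] = Γ(s/2 + k) Γ(m/2) / (Γ(s/2) Γ(m/2 + k)) = B(k, m/2) / B(k, s/2)`.
The first edgelength is `2 T` with `s = 4` and `m = 4n`.
-/

section CompactSupport

variable {X E : Type*} [TopologicalSpace X] [T2Space X] [MeasurableSpace X] [OpensMeasurableSpace X]
  [NormedAddCommGroup E] {μ : Measure X} [IsFiniteMeasure μ] {K : Set X}

theorem Continuous.integrable_of_ae_mem_isCompact (hK : IsCompact K) (hμK : ∀ᵐ x ∂μ, x ∈ K)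
    {f : X → E} (hf : Continuous f) : Integrable f μ := by
  rw [← Measure.restrict_eq_self_of_ae_mem hμK]
  exact hf.continuousOn.integrableOn_compact hK

theorem hasDerivAt_integral_of_ae_mem_isCompact [NormedSpace ℝ E] [CompleteSpace E]
    [SecondCountableTopology E]
    (hK : IsCompact K) (hμK : ∀ᵐ x ∂μ, x ∈ K) {F F' : ℝ → X → E}
    (hF : ∀ θ, Continuous (F θ)) (hF' : Continuous (Function.uncurry F'))
    (hderiv : ∀ θ x, HasDerivAt (F · x) (F' θ x) θ) (θ₀ : ℝ) :
    HasDerivAt (fun θ => ∫ x, F θ x ∂μ) (∫ x, F' θ₀ x ∂μ) θ₀ := by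
  obtain ⟨C, hC⟩ := ((isCompact_closedBall θ₀ 1).prod hK).exists_bound_of_continuousOn
    hF'.continuousOn
  refine (hasDerivAt_integral_of_dominated_loc_of_deriv_le (bound := fun _ => C)
    (Metric.ball_mem_nhds θ₀ one_pos) (.of_forall fun θ => (hF θ).aestronglyMeasurable)
    ((hF θ₀).integrable_of_ae_mem_isCompact hK hμK)
    (hF'.comp (Continuous.prodMk_right θ₀)).aestronglyMeasurable ?_ (integrable_const C)
    (.of_forall fun x θ _ => hderiv θ x)).2
  filter_upwards [hμK] with x hx θ hθ
  exact hC (θ, x) ⟨Metric.ball_subset_closedBall hθ, hx⟩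

end CompactSupport

theorem eulerBeta_div_eulerBeta {k a b : ℝ} (hk : 0 < k) (ha : 0 < a) (hb : 0 < b) :
    eulerBeta k b / eulerBeta k a = Gamma (a + k) * Gamma b / (Gamma a * Gamma (b + k)) := by
  have := Gamma_pos_of_pos hk
  have := Gamma_pos_of_pos ha
  have := Gamma_pos_of_pos hb
  have := Gamma_pos_of_pos (add_pos hk ha)
  have := Gamma_pos_of_pos (add_pos hk hb)
  rw [eulerBeta, eulerBeta, add_comm a, add_comm b]
  field_simp

noncomputable section

namespace EuclideanSpace

variable {ι : Type*}

def partialSqNorm (S : Finset ι) (x : EuclideanSpace ℝ ι) : ℝ := ∑ l ∈ S, x l ^ 2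

theorem continuous_partialSqNorm (S : Finset ι) : Continuous (partialSqNorm S) := by
  unfold partialSqNorm; fun_prop

variable [DecidableEq ι]

def givensRotationFun (i j : ι) (θ : ℝ) (x : EuclideanSpace ℝ ι) : EuclideanSpace ℝ ι :=
  WithLp.toLp 2 fun l => if l = i then cos θ * x i - sin θ * x j
    else if l = j then sin θ * x i + cos θ * x j else x l

variable {i j : ι}

theorem givensRotationFun_neg (hij : i ≠ j) (θ : ℝ) (x : EuclideanSpace ℝ ι) :
    givensRotationFun i j (-θ) (givensRotationFun i j θ x) = x := by
  ext l
  simp only [givensRotationFun, PiLp.toLp_apply, if_pos, hij.symm, if_false, cos_neg, sin_neg]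
  split_ifs with hi hj
  · subst hi; linear_combination x l * sin_sq_add_cos_sq θ
  · subst hj; linear_combination x l * sin_sq_add_cos_sq θ
  · rfl

theorem inner_givensRotationFun [Fintype ι] (hij : i ≠ j) (θ : ℝ) (x y : EuclideanSpace ℝ ι) :
    inner ℝ (givensRotationFun i j θ x) (givensRotationFun i j θ y) = inner ℝ x y := by
  have hsub : {i, j} ⊆ (Finset.univ : Finset ι) := Finset.subset_univ _
  simp only [PiLp.inner_apply, RCLike.inner_apply, conj_trivial, ← Finset.sum_sdiff hsub,
    Finset.sum_pair hij]
  congr 1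
  · refine Finset.sum_congr rfl fun l hl => ?_
    obtain ⟨hli, hlj⟩ : l ≠ i ∧ l ≠ j := by simpa using hl
    simp [givensRotationFun, hli, hlj]
  · simp only [givensRotationFun, PiLp.toLp_apply, if_pos, hij.symm, if_false]
    linear_combination (x i * y i + x j * y j) * sin_sq_add_cos_sq θ

variable [Fintype ι]

theorem partialSqNorm_add_partialSqNorm_compl (S : Finset ι) (x : EuclideanSpace ℝ ι) :
    partialSqNorm S x + partialSqNorm Sᶜ x = ‖x‖ ^ 2 := by
  simp [partialSqNorm, EuclideanSpace.norm_sq_eq, Finset.sum_add_sum_compl]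

def givensRotation (hij : i ≠ j) (θ : ℝ) : EuclideanSpace ℝ ι ≃ₗᵢ[ℝ] EuclideanSpace ℝ ι :=
  LinearEquiv.isometryOfInner
    { toFun := givensRotationFun i j θ
      invFun := givensRotationFun i j (-θ)
      map_add' x y := by
        ext l
        simp only [givensRotationFun, PiLp.add_apply, PiLp.toLp_apply]
        split_ifs <;> ring
      map_smul' c x := by
        ext l
        simp only [givensRotationFun, PiLp.smul_apply, PiLp.toLp_apply, smul_eq_mul,
          RingHom.id_apply]
        split_ifs <;> ring
      left_inv := givensRotationFun_neg hij θ
      right_inv x := by simpa using givensRotationFun_neg hij (-θ) x }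
    (inner_givensRotationFun hij θ)

variable (hij : i ≠ j) (θ : ℝ) (x : EuclideanSpace ℝ ι)

@[simp] theorem givensRotation_apply_left :
    givensRotation hij θ x i = cos θ * x i - sin θ * x j := by
  simp [givensRotation, givensRotationFun]

@[simp] theorem givensRotation_apply_right :
    givensRotation hij θ x j = sin θ * x i + cos θ * x j := by
  simp [givensRotation, givensRotationFun, hij.symm]

theorem givensRotation_apply_of_ne {l : ι} (hli : l ≠ i) (hlj : l ≠ j) :
    givensRotation hij θ x l = x l := by
  simp [givensRotation, givensRotationFun, hli, hlj]

@[simp] theorem givensRotation_zero : givensRotation hij 0 x = x := by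
  ext l
  change givensRotationFun i j 0 x l = x l
  simp only [givensRotationFun, PiLp.toLp_apply, cos_zero, sin_zero]
  split_ifs with hi hj <;> simp_all

theorem continuous_givensRotation :
    Continuous fun p : ℝ × EuclideanSpace ℝ ι => givensRotation hij p.1 p.2 := by
  refine (PiLp.continuous_toLp 2 _).comp (continuous_pi fun l => ?_)
  change Continuous fun p : ℝ × EuclideanSpace ℝ ι => givensRotationFun i j p.1 p.2 l
  simp only [givensRotationFun]
  split_ifs <;> fun_prop

theorem hasDerivAt_givensRotation_apply_left :
    HasDerivAt (fun θ => givensRotation hij θ x i) (-givensRotation hij θ x j) θ := by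
  simp only [givensRotation_apply_left, givensRotation_apply_right]
  exact (((hasDerivAt_cos θ).mul_const (x i)).sub ((hasDerivAt_sin θ).mul_const (x j))).congr_deriv
    (by ring)

theorem hasDerivAt_givensRotation_apply_right :
    HasDerivAt (fun θ => givensRotation hij θ x j) (givensRotation hij θ x i) θ := by
  simp only [givensRotation_apply_left, givensRotation_apply_right]
  exact (((hasDerivAt_sin θ).mul_const (x i)).add ((hasDerivAt_cos θ).mul_const (x j))).congr_deriv
    (by ring)

theorem partialSqNorm_givensRotation {S : Finset ι} (hi : i ∈ S) (hj : j ∉ S) :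
    partialSqNorm S (givensRotation hij θ x)
      = partialSqNorm (S.erase i) x + givensRotation hij θ x i ^ 2 := by
  rw [partialSqNorm, ← Finset.sum_erase_add _ _ hi, partialSqNorm]
  congr 1
  refine Finset.sum_congr rfl fun l hl => ?_
  rw [givensRotation_apply_of_ne _ _ _ (Finset.ne_of_mem_erase hl)
    (ne_of_mem_of_not_mem (Finset.mem_of_mem_erase hl) hj)]

end EuclideanSpace

end

section RotationInvariant

open EuclideanSpace

variable {ι : Type*} [Fintype ι] [DecidableEq ι] {μ : Measure (EuclideanSpace ℝ ι)}

theorem integral_eq_zero_of_hasDerivAt_givensRotation [IsFiniteMeasure μ]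
    (hsphere : ∀ᵐ x ∂μ, x ∈ Metric.sphere (0 : EuclideanSpace ℝ ι) 1)
    (hinv : ∀ O : EuclideanSpace ℝ ι ≃ₗᵢ[ℝ] EuclideanSpace ℝ ι, Measure.map (fun x => O x) μ = μ)
    {i j : ι} (hij : i ≠ j) {g G : EuclideanSpace ℝ ι → ℝ} (hg : Continuous g)
    (hG : Continuous G)
    (hderiv : ∀ θ x, HasDerivAt (fun θ => g (givensRotation hij θ x))
      (G (givensRotation hij θ x)) θ) :
    ∫ x, G x ∂μ = 0 := by
  have hconst : (fun θ => ∫ x, g (givensRotation hij θ x) ∂μ) = fun _ => ∫ x, g x ∂μ := by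
    funext θ
    conv_rhs => rw [← hinv (givensRotation hij θ)]
    rw [integral_map (givensRotation hij θ).continuous.aemeasurable hg.aestronglyMeasurable]
  have h := hasDerivAt_integral_of_ae_mem_isCompact (isCompact_sphere 0 1) hsphere
    (F := fun θ x => g (givensRotation hij θ x)) (F' := fun θ x => G (givensRotation hij θ x))
    (fun θ => hg.comp (givensRotation hij θ).continuous)
    (hG.comp (continuous_givensRotation hij)) hderiv 0
  rw [hconst] at h
  simpa using h.unique (hasDerivAt_const 0 _)

theorem integral_partialSqNorm_pow_mul_sq_sub_sq [IsFiniteMeasure μ]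
    (hsphere : ∀ᵐ x ∂μ, x ∈ Metric.sphere (0 : EuclideanSpace ℝ ι) 1)
    (hinv : ∀ O : EuclideanSpace ℝ ι ≃ₗᵢ[ℝ] EuclideanSpace ℝ ι, Measure.map (fun x => O x) μ = μ)
    {S : Finset ι} {i j : ι} (hi : i ∈ S) (hj : j ∉ S) (k : ℕ) :
    ∫ x, (partialSqNorm S x ^ k * (x i ^ 2 - x j ^ 2)
      - 2 * k * partialSqNorm S x ^ (k - 1) * (x i ^ 2 * x j ^ 2)) ∂μ = 0 := by
  have hij := ne_of_mem_of_not_mem hi hj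
  refine integral_eq_zero_of_hasDerivAt_givensRotation hsphere hinv hij
    (g := fun y => partialSqNorm S y ^ k * (y i * y j))
    (by have := continuous_partialSqNorm S; fun_prop)
    (by have := continuous_partialSqNorm S; fun_prop) fun θ x => ?_
  have hleft := hasDerivAt_givensRotation_apply_left hij θ x
  have hright := hasDerivAt_givensRotation_apply_right hij θ x
  have hT : HasDerivAt (fun θ => partialSqNorm S (givensRotation hij θ x))
      (2 * givensRotation hij θ x i * -givensRotation hij θ x j) θ := by
    simp_rw [partialSqNorm_givensRotation hij _ x hi hj]
    exact ((hleft.pow 2).const_add _).congr_deriv (by simp)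
  exact ((hT.fun_pow k).fun_mul (hleft.fun_mul hright)).congr_deriv (by ring)

theorem integral_partialSqNorm_pow_succ [IsFiniteMeasure μ]
    (hsphere : ∀ᵐ x ∂μ, x ∈ Metric.sphere (0 : EuclideanSpace ℝ ι) 1)
    (hinv : ∀ O : EuclideanSpace ℝ ι ≃ₗᵢ[ℝ] EuclideanSpace ℝ ι, Measure.map (fun x => O x) μ = μ)
    (S : Finset ι) (k : ℕ) :
    (Fintype.card ι + 2 * k) * ∫ x, partialSqNorm S x ^ (k + 1) ∂μ
      = (S.card + 2 * k) * ∫ x, partialSqNorm S x ^ k ∂μ := by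
  have hint : ∀ {f : EuclideanSpace ℝ ι → ℝ}, Continuous f → Integrable f μ :=
    fun hf => hf.integrable_of_ae_mem_isCompact (isCompact_sphere 0 1) hsphere
  have hcont := continuous_partialSqNorm S
  have hsum : ∫ x, ∑ i ∈ S, ∑ j ∈ Sᶜ, (partialSqNorm S x ^ k * (x i ^ 2 - x j ^ 2)
      - 2 * k * partialSqNorm S x ^ (k - 1) * (x i ^ 2 * x j ^ 2)) ∂μ = 0 := by
    rw [integral_finsetSum _ fun i _ => hint (by fun_prop)]
    refine Finset.sum_eq_zero fun i hi => ?_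
    rw [integral_finsetSum _ fun j _ => hint (by fun_prop)]
    exact Finset.sum_eq_zero fun j hj =>
      integral_partialSqNorm_pow_mul_sq_sub_sq hsphere hinv hi (Finset.mem_compl.1 hj) k
  have hpointwise : ∀ᵐ x ∂μ, ∑ i ∈ S, ∑ j ∈ Sᶜ, (partialSqNorm S x ^ k * (x i ^ 2 - x j ^ 2)
      - 2 * k * partialSqNorm S x ^ (k - 1) * (x i ^ 2 * x j ^ 2))
      = Sᶜ.card * partialSqNorm S x ^ (k + 1)
        - (S.card + 2 * k) * (partialSqNorm S x ^ k - partialSqNorm S x ^ (k + 1)) := by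
    filter_upwards [hsphere] with x hx
    have hcompl : partialSqNorm Sᶜ x = 1 - partialSqNorm S x := by
      have := partialSqNorm_add_partialSqNorm_compl S x
      rw [mem_sphere_zero_iff_norm.1 hx, one_pow] at this
      linarith
    simp only [Finset.sum_sub_distrib, ← Finset.mul_sum, ← Finset.sum_mul, Finset.sum_const,
      nsmul_eq_mul]
    rw [show ∑ i ∈ S, x i ^ 2 = partialSqNorm S x from rfl,
      show ∑ j ∈ Sᶜ, x j ^ 2 = partialSqNorm Sᶜ x from rfl, hcompl]
    rcases k with _ | k
    · simp
    · simp only [Nat.add_sub_cancel]; push_cast; ring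
  rw [integral_congr_ae hpointwise, integral_sub (hint (by fun_prop)) (hint (by fun_prop)),
    integral_const_mul, integral_const_mul, integral_sub (hint (by fun_prop)) (hint (by fun_prop))]
    at hsum
  have hcard : (S.card + Sᶜ.card : ℝ) = Fintype.card ι := by exact_mod_cast S.card_add_card_compl
  linear_combination hsum - (∫ x, partialSqNorm S x ^ (k + 1) ∂μ) * hcard

theorem integral_partialSqNorm_pow_mul_Gamma [IsProbabilityMeasure μ]
    (hsphere : ∀ᵐ x ∂μ, x ∈ Metric.sphere (0 : EuclideanSpace ℝ ι) 1)
    (hinv : ∀ O : EuclideanSpace ℝ ι ≃ₗᵢ[ℝ] EuclideanSpace ℝ ι, Measure.map (fun x => O x) μ = μ)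
    {S : Finset ι} (hS : S.Nonempty) (k : ℕ) :
    (∫ x, partialSqNorm S x ^ k ∂μ) * Gamma (S.card / 2) * Gamma (Fintype.card ι / 2 + k)
      = Gamma (S.card / 2 + k) * Gamma (Fintype.card ι / 2) := by
  induction k with
  | zero => simp
  | succ k ih =>
    have hs : (0 : ℝ) < S.card := by exact_mod_cast hS.card_pos
    have hm : (S.card : ℝ) ≤ Fintype.card ι := by exact_mod_cast S.card_le_univ
    have hk : (0 : ℝ) ≤ k := k.cast_nonneg
    push_cast
    rw [← add_assoc, ← add_assoc, Gamma_add_one (by linarith), Gamma_add_one (by linarith)]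
    linear_combination (Gamma (S.card / 2) * Gamma (Fintype.card ι / 2 + k) / 2)
      * integral_partialSqNorm_pow_succ hsphere hinv S k + (S.card / 2 + k) * ih

theorem integral_partialSqNorm_pow [IsProbabilityMeasure μ]
    (hsphere : ∀ᵐ x ∂μ, x ∈ Metric.sphere (0 : EuclideanSpace ℝ ι) 1)
    (hinv : ∀ O : EuclideanSpace ℝ ι ≃ₗᵢ[ℝ] EuclideanSpace ℝ ι, Measure.map (fun x => O x) μ = μ)
    {S : Finset ι} (hS : S.Nonempty) {k : ℕ} (hk : k ≠ 0) :
    ∫ x, partialSqNorm S x ^ k ∂μ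
      = eulerBeta k (Fintype.card ι / 2) / eulerBeta k (S.card / 2) := by
  have hs : (0 : ℝ) < S.card := by exact_mod_cast hS.card_pos
  have hm : (S.card : ℝ) ≤ Fintype.card ι := by exact_mod_cast S.card_le_univ
  have hk : (0 : ℝ) < k := by exact_mod_cast Nat.pos_of_ne_zero hk
  rw [eulerBeta_div_eulerBeta hk (by positivity) (by linarith), eq_div_iff
    (mul_pos (Gamma_pos_of_pos (by positivity)) (Gamma_pos_of_pos (by linarith))).ne']
  linear_combination integral_partialSqNorm_pow_mul_Gamma hsphere hinv hS k

end RotationInvariant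

/-- The `p`-th moment of the first edgelength of a random spatial arm of total length 2:
`E(|e₁|^p, Arm₃(n)) = 2^p · B(p,2n)/B(p,2)`.  Here `μ` is the uniform (rotation-invariant)
probability measure on the unit sphere in `ℝ^{4n}`, and the first edgelength of the arm
determined by `√2·x` is `2(x₀² + x₁² + x₂² + x₃²)`. -/
theorem edgelength_moment_space_arm (n p : ℕ) (hn : 1 ≤ n) (hp : 1 ≤ p)
    (μ : Measure (EuclideanSpace ℝ (Fin (4 * n)))) [IsProbabilityMeasure μ]
    (hsphere : μ (Metric.sphere (0 : EuclideanSpace ℝ (Fin (4 * n))) 1) = 1)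
    (hinv : ∀ O : EuclideanSpace ℝ (Fin (4 * n)) ≃ₗᵢ[ℝ] EuclideanSpace ℝ (Fin (4 * n)),
      Measure.map (fun x => O x) μ = μ) :
    ∫ x, (2 * ((x ⟨0, by omega⟩) ^ 2 + (x ⟨1, by omega⟩) ^ 2
          + (x ⟨2, by omega⟩) ^ 2 + (x ⟨3, by omega⟩) ^ 2)) ^ p ∂μ
      = 2 ^ p * eulerBeta p (2 * n) / eulerBeta p 2 := by
  let S : Finset (Fin (4 * n)) := Finset.univ.map (Fin.castLEEmb (by omega : 4 ≤ 4 * n))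
  have hS : S.card = 4 := by simp [S]
  have hT : ∀ x : EuclideanSpace ℝ (Fin (4 * n)), EuclideanSpace.partialSqNorm S x
      = x ⟨0, by omega⟩ ^ 2 + x ⟨1, by omega⟩ ^ 2 + x ⟨2, by omega⟩ ^ 2 + x ⟨3, by omega⟩ ^ 2 := by
    intro x
    simp only [S, EuclideanSpace.partialSqNorm, Finset.sum_map, Fin.sum_univ_four]
    rfl
  have hsphere' : ∀ᵐ x ∂μ, x ∈ Metric.sphere (0 : EuclideanSpace ℝ (Fin (4 * n))) 1 :=
    (mem_ae_iff_prob_eq_one Metric.isClosed_sphere.measurableSet).2 hsphere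
  simp_rw [← hT, mul_pow]
  rw [integral_const_mul, integral_partialSqNorm_pow hsphere' hinv
    (by simp [← Finset.card_pos, hS]) (by omega), hS, Fintype.card_fin, mul_div_assoc,
    show ((4 * n : ℕ) : ℝ) / 2 = 2 * n by push_cast; ring, show ((4 : ℕ) : ℝ) / 2 = 2 by norm_num]
end

section
/- Let n ≥ 1 and p ≥ 1 be natural numbers, and let μ be the uniform (rotation-invariant) probability measure on the unit sphere in EuclideanSpace ℝ (Fin (2n)). Then the p-th moment of the first edgelength of a random planar arm of length 2 satisfies ∫ (2·(x₀² + x₁²))^p dμ(x) = 2^p · B(p, n) / B(p, 1), where x₀, x₁ are the first two coordinates of x and B is the Euler Beta function B(a,b) = Γ(a)Γ(b)/Γ(a+b). -/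
open MeasureTheory Real

/-!
Transport the complex structure of `ℂⁿ` to `ℝ²ⁿ` by a real isometry `φ` with
`φ e₁ = i • φ e₀`, so that `x₀² + x₁² = ‖⟪φ e₀, φ x⟫_ℂ‖²`. The kernel
`K(x, y) = ‖⟪φ x, φ y⟫_ℂ‖^(2p)` is invariant under the unitary group, which is transitive on the
unit sphere. Hence `∫ K(x, y) dμ(x) = M ‖y‖^(2p)` with `M` the moment we want, while
`∫ K(x, y) e^(-π‖y‖²) dy` is the same number `C` for every unit `x`. Integrating
`K(x, y) e^(-π‖y‖²)` against `μ ⊗ volume` in both orders gives `C = M ∫ ‖y‖^(2p) e^(-π‖y‖²) dy`;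
no uniqueness of the invariant measure on the sphere is needed. Both Gaussian integrals are Gamma
quotients: `C = Γ(p+1)/π^p` since the Gaussian factorises over coordinates, and the radial one is
`Γ(n+p)/(π^p Γ(n))` in polar coordinates. So `M = Γ(p+1)Γ(n)/Γ(n+p) = B(p,n)/B(p,1)`.
-/

open Module
open scoped InnerProductSpace

section GaussianIntegrals

variable {E : Type*} [NormedAddCommGroup E] [InnerProductSpace ℝ E] [FiniteDimensional ℝ E]
  [MeasurableSpace E] [BorelSpace E]

theorem integral_Ioi_pow_mul_exp_neg_pi_mul_sq (m : ℕ) :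
    ∫ x in Set.Ioi (0 : ℝ), x ^ m * exp (-π * x ^ 2)
      = π ^ (-((m : ℝ) + 1) / 2) * (1 / 2) * Gamma (((m : ℝ) + 1) / 2) := by
  rw [← integral_rpow_mul_exp_neg_mul_rpow two_pos (neg_one_lt_zero.trans_le m.cast_nonneg) pi_pos]
  refine setIntegral_congr_fun measurableSet_Ioi fun x _ => ?_
  norm_num [rpow_natCast, rpow_two]

theorem integral_exp_neg_pi_mul_sq_norm : ∫ x : E, exp (-π * ‖x‖ ^ 2) = 1 := by
  rw [GaussianFourier.integral_rexp_neg_mul_sq_norm pi_pos, div_self pi_ne_zero, one_rpow]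

theorem integrable_norm_pow_mul_exp_neg_pi_mul_sq_norm [Nontrivial E] (m : ℕ) :
    Integrable fun x : E => ‖x‖ ^ m * exp (-π * ‖x‖ ^ 2) := by
  refine (integrable_fun_norm_addHaar volume (f := fun t => t ^ m * exp (-π * t ^ 2))).2 ?_
  refine (integrableOn_rpow_mul_exp_neg_mul_sq pi_pos (s := ((finrank ℝ E - 1 + m : ℕ) : ℝ))
    (neg_one_lt_zero.trans_le (Nat.cast_nonneg _))).congr_fun (fun t _ => ?_) measurableSet_Ioi
  simp only [rpow_natCast, pow_add, smul_eq_mul, mul_assoc]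

theorem integral_norm_pow_mul_exp_neg_pi_mul_sq_norm [Nontrivial E] (k : ℕ) :
    ∫ x : E, ‖x‖ ^ (2 * k) * exp (-π * ‖x‖ ^ 2)
      = Gamma (finrank ℝ E / 2 + k) / (π ^ k * Gamma (finrank ℝ E / 2)) := by
  set d := finrank ℝ E
  have hd : 1 ≤ d := finrank_pos
  have radial (f : ℝ → ℝ) : ∫ x : E, f ‖x‖
      = (d * volume.real (Metric.ball (0 : E) 1))
        * ∫ t in Set.Ioi (0 : ℝ), t ^ (d - 1) * f t := by
    rw [integral_fun_norm_addHaar volume f, nsmul_eq_mul, smul_eq_mul, mul_assoc]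
    rfl
  -- the Gaussian's total mass `1` determines the surface factor `d • vol(ball 0 1)`
  have hmass := integral_exp_neg_pi_mul_sq_norm (E := E)
  rw [radial fun t => exp (-π * t ^ 2)] at hmass
  rw [radial fun t => t ^ (2 * k) * exp (-π * t ^ 2), eq_inv_of_mul_eq_one_left hmass]
  simp_rw [← mul_assoc, ← pow_add]
  rw [integral_Ioi_pow_mul_exp_neg_pi_mul_sq, integral_Ioi_pow_mul_exp_neg_pi_mul_sq]
  have hc1 : ((d - 1 + 2 * k : ℕ) : ℝ) + 1 = d + 2 * k := by push_cast [Nat.cast_sub hd]; ring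
  have hc2 : ((d - 1 : ℕ) : ℝ) + 1 = d := by push_cast [Nat.cast_sub hd]; ring
  rw [hc1, hc2, show ((d : ℝ) + 2 * k) / 2 = d / 2 + k by ring,
    show -((d : ℝ) + 2 * k) / 2 = -d / 2 + -k by ring, rpow_add pi_pos, rpow_neg pi_pos.le,
    rpow_natCast]
  have := Gamma_pos_of_pos (show (0 : ℝ) < d / 2 by positivity)
  have := rpow_pos_of_pos pi_pos (-d / 2)
  field_simp

theorem integral_exp_neg_pi_mul_sum_sq (ι : Type*) [Fintype ι] :
    ∫ a : ι → ℝ, exp (-π * ∑ i, a i ^ 2) = 1 := by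
  simp_rw [Finset.mul_sum, exp_sum]
  rw [volume_pi, integral_fintype_prod_eq_pow (fun x : ℝ => exp (-π * x ^ 2)), integral_gaussian,
    div_self pi_ne_zero, sqrt_one, one_pow]

theorem integral_comp_restrict_mul_exp_neg_pi_mul_sq_norm {ι : Type*} [Fintype ι] (P : ι → Prop)
    [DecidablePred P] (f : EuclideanSpace ℝ {i // P i} → ℝ) :
    ∫ y : EuclideanSpace ℝ ι, f (WithLp.toLp 2 fun i : {i // P i} => y i) * exp (-π * ‖y‖ ^ 2)
      = ∫ u : EuclideanSpace ℝ {i // P i}, f u * exp (-π * ‖u‖ ^ 2) := by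
  let e := MeasurableEquiv.piEquivPiSubtypeProd (fun _ : ι => ℝ) P
  have he : MeasurePreserving e := volume_preserving_piEquivPiSubtypeProd _ P
  have hrestrict (z : ({i // P i} → ℝ) × ({i // ¬P i} → ℝ)) :
      (fun i : {i // P i} => e.symm z i) = z.1 := by
    ext i
    simp [e, MeasurableEquiv.piEquivPiSubtypeProd_symm_apply, i.2]
  have hsplit (z : ({i // P i} → ℝ) × ({i // ¬P i} → ℝ)) :
      ∑ i, e.symm z i ^ 2 = ∑ i, z.1 i ^ 2 + ∑ i, z.2 i ^ 2 := by
    rw [← Fintype.sum_subtype_add_sum_subtype P]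
    congr 1 <;> exact Finset.sum_congr rfl fun i _ => by
      simp [e, MeasurableEquiv.piEquivPiSubtypeProd_symm_apply, i.2]
  simp_rw [EuclideanSpace.norm_sq_eq, Real.norm_eq_abs, sq_abs]
  rw [← (EuclideanSpace.volume_preserving_symm_measurableEquiv_toLp ι).symm.integral_comp',
    ← (EuclideanSpace.volume_preserving_symm_measurableEquiv_toLp _).symm.integral_comp',
    ← he.symm.integral_comp', Measure.volume_eq_prod]
  simp_rw [MeasurableEquiv.symm_symm, MeasurableEquiv.coe_toLp, hrestrict, hsplit, mul_add,
    exp_add, ← mul_assoc]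
  rw [integral_prod_mul (fun u => f (WithLp.toLp 2 u) * exp (-π * ∑ i, u i ^ 2))
    (fun v : {i // ¬P i} → ℝ => exp (-π * ∑ i, v i ^ 2)), integral_exp_neg_pi_mul_sum_sq,
    mul_one]

theorem integral_sq_add_sq_pow_mul_exp_neg_pi_mul_sq_norm {ι : Type*} [Fintype ι] {i j : ι}
    (hij : i ≠ j) (p : ℕ) :
    ∫ y : EuclideanSpace ℝ ι, (y i ^ 2 + y j ^ 2) ^ p * exp (-π * ‖y‖ ^ 2)
      = Gamma (p + 1) / π ^ p := by
  classical
  let P : ι → Prop := fun k => k = i ∨ k = j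
  have hne : (⟨i, .inl rfl⟩ : {k // P k}) ≠ ⟨j, .inr rfl⟩ := by simp [hij]
  have huniv : (Finset.univ : Finset {k // P k}) = {⟨i, .inl rfl⟩, ⟨j, .inr rfl⟩} := by
    ext ⟨k, hk | hk⟩ <;> simp [hk]
  have hpair (u : EuclideanSpace ℝ {k // P k}) :
      u ⟨i, .inl rfl⟩ ^ 2 + u ⟨j, .inr rfl⟩ ^ 2 = ‖u‖ ^ 2 := by
    simp [EuclideanSpace.norm_sq_eq, huniv, Finset.sum_pair hne]
  have hcard : finrank ℝ (EuclideanSpace ℝ {k // P k}) = 2 := by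
    rw [finrank_euclideanSpace, ← Finset.card_univ, huniv, Finset.card_pair hne]
  have : Nontrivial (EuclideanSpace ℝ {k // P k}) :=
    Module.nontrivial_of_finrank_eq_succ hcard
  have hmoment :=
    integral_norm_pow_mul_exp_neg_pi_mul_sq_norm (E := EuclideanSpace ℝ {k // P k}) p
  rw [hcard] at hmoment
  have hmarginal := integral_comp_restrict_mul_exp_neg_pi_mul_sq_norm P
    fun u => (u ⟨i, .inl rfl⟩ ^ 2 + u ⟨j, .inr rfl⟩ ^ 2) ^ p
  simp_rw [hpair, ← pow_mul, hmoment] at hmarginal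
  rw [hmarginal]
  norm_num [add_comm]

end GaussianIntegrals

theorem eq_mul_integral_norm_pow_mul_of_homogeneous {E : Type*} [NormedAddCommGroup E]
    [NormedSpace ℝ E] [MeasurableSpace E] [BorelSpace E] [SecondCountableTopology E]
    (μ : Measure E) [IsProbabilityMeasure μ] (hμ : ∀ᵐ x ∂μ, ‖x‖ = 1)
    (ν : Measure E) [SFinite ν] [NullSingletonClass ν]
    {F : E → E → ℝ} {m : ℕ} (hF : Continuous (Function.uncurry F))
    (hF_le : ∀ x y, |F x y| ≤ ‖x‖ ^ m * ‖y‖ ^ m)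
    (hF_smul : ∀ x y (c : ℝ), 0 ≤ c → F x (c • y) = c ^ m * F x y)
    {g : E → ℝ} (hg : Continuous g) (hg_int : Integrable (fun y => ‖y‖ ^ m * g y) ν)
    {M C : ℝ} (hM : ∀ y, ‖y‖ = 1 → ∫ x, F x y ∂μ = M)
    (hC : ∀ x, ‖x‖ = 1 → ∫ y, F x y * g y ∂ν = C) :
    C = M * ∫ y, ‖y‖ ^ m * g y ∂ν := by
  have hnorm_int : Integrable (fun x => ‖x‖ ^ m) μ :=
    (integrable_const 1).congr <| hμ.mono fun x hx => by simp [hx]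
  have hint : Integrable (Function.uncurry fun x y => F x y * g y) (μ.prod ν) := by
    refine (hnorm_int.mul_prod hg_int.norm).mono' ?_ (.of_forall fun ⟨x, y⟩ => ?_)
    · exact (hF.mul (hg.comp continuous_snd)).aestronglyMeasurable
    · change |F x y * g y| ≤ ‖x‖ ^ m * |‖y‖ ^ m * g y|
      rw [abs_mul, abs_mul, abs_of_nonneg (by positivity : (0 : ℝ) ≤ ‖y‖ ^ m), ← mul_assoc]
      exact mul_le_mul_of_nonneg_right (hF_le x y) (abs_nonneg _)
  have houter : ∫ x, ∫ y, F x y * g y ∂ν ∂μ = C := by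
    rw [integral_congr_ae (hμ.mono fun x hx => hC x hx), integral_const, probReal_univ, one_smul]
  have hinner : ∀ᵐ y ∂ν, ∫ x, F x y * g y ∂μ = M * (‖y‖ ^ m * g y) := by
    filter_upwards [ν.ae_ne 0] with y hy
    have hy' : ‖y‖ ≠ 0 := norm_ne_zero_iff.mpr hy
    have hscale (x : E) : F x y = ‖y‖ ^ m * F x (‖y‖⁻¹ • y) := by
      rw [← hF_smul _ _ _ (norm_nonneg y), smul_inv_smul₀ hy']
    have hunit : ‖‖y‖⁻¹ • y‖ = 1 := by rw [norm_smul, norm_inv, norm_norm, inv_mul_cancel₀ hy']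
    simp_rw [hscale]
    rw [integral_mul_const, integral_const_mul, hM _ hunit]
    ring
  rw [← houter, integral_integral_swap hint, integral_congr_ae hinner, integral_const_mul]

theorem exists_linearIsometryEquiv_apply_eq {𝕜 V : Type*} [RCLike 𝕜] [NormedAddCommGroup V]
    [InnerProductSpace 𝕜 V] [FiniteDimensional 𝕜 V] {u v : V} (hu : ‖u‖ = 1) (hv : ‖v‖ = 1) :
    ∃ U : V ≃ₗᵢ[𝕜] V, U u = v := by
  have : Nontrivial V := nontrivial_of_ne u 0 (by rintro rfl; simp at hu)
  let i₀ : Fin (finrank 𝕜 V) := ⟨0, finrank_pos⟩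
  have extend (w : V) (hw : ‖w‖ = 1) :
      ∃ b : OrthonormalBasis (Fin (finrank 𝕜 V)) 𝕜 V, b i₀ = w := by
    have hw : Orthonormal 𝕜 (Set.domRestrict {i₀} fun _ => w) :=
      ⟨fun _ => hw, fun i j hij => absurd (Subtype.ext (i.2.trans j.2.symm)) hij⟩
    obtain ⟨b, hb⟩ := hw.exists_orthonormalBasis_extension_of_card_eq (Fintype.card_fin _).symm
    exact ⟨b, hb i₀ rfl⟩
  obtain ⟨b, rfl⟩ := extend u hu
  obtain ⟨b', rfl⟩ := extend v hv
  exact ⟨b.repr.trans b'.repr.symm, by simp⟩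

theorem exists_linearIsometryEquiv_single_eq_I_smul {ι V : Type*} [Fintype ι] [DecidableEq ι]
    [NormedAddCommGroup V] [InnerProductSpace ℂ V] (hcard : finrank ℝ V = Fintype.card ι)
    {i j : ι} (hij : i ≠ j) :
    ∃ φ : EuclideanSpace ℝ ι ≃ₗᵢ[ℝ] V,
      φ (EuclideanSpace.single j 1) = Complex.I • φ (EuclideanSpace.single i 1) := by
  let _ : InnerProductSpace ℝ V := InnerProductSpace.complexToReal
  have hpos : 0 < finrank ℝ V := hcard ▸ Fintype.card_pos_iff.2 ⟨i⟩
  have : FiniteDimensional ℝ V := .of_finrank_pos hpos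
  have : Nontrivial V := nontrivial_of_finrank_pos hpos
  obtain ⟨u, hu⟩ := exists_norm_eq V zero_le_one
  let v : ι → V := fun k => if k = i then u else Complex.I • u
  have hperp : ⟪u, Complex.I • u⟫_ℝ = 0 := real_inner_I_smul_self ℂ u
  have hv : Orthonormal ℝ (Set.domRestrict {i, j} v) := by
    rw [orthonormal_iff_ite]
    rintro ⟨k, rfl | rfl⟩ ⟨l, rfl | rfl⟩ <;>
      simp [v, hij, hij.symm, hu, norm_smul, hperp, real_inner_comm u, Subtype.ext_iff]
  obtain ⟨b, hb⟩ := hv.exists_orthonormalBasis_extension_of_card_eq hcard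
  refine ⟨b.repr.symm, ?_⟩
  rw [b.repr_symm_single, b.repr_symm_single, hb i (by simp), hb j (by simp)]
  simp [v, hij.symm]

section ComplexStructure

variable {E V : Type*} [NormedAddCommGroup E] [InnerProductSpace ℝ E]
  [NormedAddCommGroup V] [InnerProductSpace ℂ V]

theorem LinearIsometry.re_inner_map_map (φ : E →ₗᵢ[ℝ] V) (a x : E) :
    (⟪φ a, φ x⟫_ℂ).re = ⟪a, x⟫_ℝ := by
  rw [← RCLike.re_to_complex,
    re_inner_eq_norm_add_mul_self_sub_norm_mul_self_sub_norm_mul_self_div_two,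
    real_inner_eq_norm_add_mul_self_sub_norm_mul_self_sub_norm_mul_self_div_two, ← map_add,
    φ.norm_map, φ.norm_map, φ.norm_map]

theorem LinearIsometry.norm_inner_map_map_sq_of_map_eq_I_smul (φ : E →ₗᵢ[ℝ] V) {a b : E}
    (h : φ b = Complex.I • φ a) (x : E) :
    ‖⟪φ a, φ x⟫_ℂ‖ ^ 2 = ⟪a, x⟫_ℝ ^ 2 + ⟪b, x⟫_ℝ ^ 2 := by
  have him : (⟪φ a, φ x⟫_ℂ).im = ⟪b, x⟫_ℝ := by
    rw [← φ.re_inner_map_map, h, inner_smul_left]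
    simp
  rw [Complex.sq_norm, Complex.normSq_apply, φ.re_inner_map_map, him]
  ring

variable [FiniteDimensional ℂ V]

theorem exists_linearIsometryEquiv_apply_eq_and_inner_map_map (φ : E ≃ₗᵢ[ℝ] V) {x y : E}
    (hx : ‖x‖ = 1) (hy : ‖y‖ = 1) :
    ∃ O : E ≃ₗᵢ[ℝ] E, O x = y ∧ ∀ a b, ⟪φ (O a), φ (O b)⟫_ℂ = ⟪φ a, φ b⟫_ℂ := by
  obtain ⟨U, hU⟩ := exists_linearIsometryEquiv_apply_eq (𝕜 := ℂ) (u := φ x) (v := φ y)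
    (by rwa [φ.norm_map]) (by rwa [φ.norm_map])
  let Uℝ : V ≃ₗᵢ[ℝ] V := { U.toLinearEquiv.restrictScalars ℝ with norm_map' := U.norm_map }
  have hUℝ (w : V) : Uℝ w = U w := rfl
  exact ⟨φ.trans (Uℝ.trans φ.symm), by simp [hUℝ, hU], fun a b => by simp [hUℝ]⟩

variable [FiniteDimensional ℝ E] [MeasurableSpace E] [BorelSpace E]

theorem integral_norm_inner_pow_mul_exp_neg_pi_mul_sq_norm (μ : Measure E)
    [IsProbabilityMeasure μ] (hμ : ∀ᵐ x ∂μ, ‖x‖ = 1) (hinv : ∀ O : E ≃ₗᵢ[ℝ] E, μ.map O = μ)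
    (φ : E ≃ₗᵢ[ℝ] V) {e : E} (he : ‖e‖ = 1) (p : ℕ) :
    ∫ y, ‖⟪φ e, φ y⟫_ℂ‖ ^ (2 * p) * exp (-π * ‖y‖ ^ 2)
      = (∫ x, ‖⟪φ e, φ x⟫_ℂ‖ ^ (2 * p) ∂μ)
        * (Gamma (finrank ℝ E / 2 + p) / (π ^ p * Gamma (finrank ℝ E / 2))) := by
  have : Nontrivial E := nontrivial_of_ne e 0 (by rintro rfl; simp at he)
  rw [← integral_norm_pow_mul_exp_neg_pi_mul_sq_norm]
  refine eq_mul_integral_norm_pow_mul_of_homogeneous μ hμ volume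
    (F := fun x y => ‖⟪φ x, φ y⟫_ℂ‖ ^ (2 * p)) (by fun_prop) (fun x y => ?_) (fun x y c hc => ?_)
    (by fun_prop) (integrable_norm_pow_mul_exp_neg_pi_mul_sq_norm _) (fun y hy => ?_)
    (fun x hx => ?_)
  · rw [abs_of_nonneg (by positivity), ← mul_pow, ← φ.norm_map, ← φ.norm_map]
    exact pow_le_pow_left₀ (norm_nonneg _) (norm_inner_le_norm _ _) _
  · rw [φ.map_smul, RCLike.real_smul_eq_coe_smul (K := ℂ), inner_smul_right, norm_mul, mul_pow,
      RCLike.norm_of_nonneg hc]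
  · obtain ⟨O, rfl, hO⟩ := exists_linearIsometryEquiv_apply_eq_and_inner_map_map φ he hy
    have hO_μ : MeasurePreserving O μ μ := ⟨O.continuous.measurable, hinv O⟩
    rw [← hO_μ.integral_comp O.toHomeomorph.measurableEmbedding]
    simp_rw [hO, norm_inner_symm (φ _) (φ e)]
  · obtain ⟨O, rfl, hO⟩ := exists_linearIsometryEquiv_apply_eq_and_inner_map_map φ he hx
    rw [← O.measurePreserving.integral_comp O.toHomeomorph.measurableEmbedding]
    simp_rw [hO, O.norm_map]

end ComplexStructure

theorem integral_sq_add_sq_pow_of_map_linearIsometryEquiv_eq {ι : Type*} [Fintype ι]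
    [DecidableEq ι] {n : ℕ} (hι : Fintype.card ι = 2 * n) (μ : Measure (EuclideanSpace ℝ ι))
    [IsProbabilityMeasure μ] (hμ : ∀ᵐ x ∂μ, ‖x‖ = 1)
    (hinv : ∀ O : EuclideanSpace ℝ ι ≃ₗᵢ[ℝ] EuclideanSpace ℝ ι, μ.map O = μ)
    {i j : ι} (hij : i ≠ j) (p : ℕ) :
    ∫ x, (x i ^ 2 + x j ^ 2) ^ p ∂μ = Gamma (p + 1) * Gamma n / Gamma (n + p) := by
  obtain ⟨φ, hφ⟩ := exists_linearIsometryEquiv_single_eq_I_smul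
    (V := EuclideanSpace ℂ (Fin n)) (by simp [finrank_real_of_complex, hι]) hij
  have hkernel (x : EuclideanSpace ℝ ι) :
      ‖⟪φ (EuclideanSpace.single i 1), φ x⟫_ℂ‖ ^ (2 * p) = (x i ^ 2 + x j ^ 2) ^ p := by
    rw [pow_mul]
    congr 1
    simpa [EuclideanSpace.inner_single_left] using
      φ.toLinearIsometry.norm_inner_map_map_sq_of_map_eq_I_smul hφ x
  have key := integral_norm_inner_pow_mul_exp_neg_pi_mul_sq_norm μ hμ hinv φ
    (e := EuclideanSpace.single i 1) (by simp) p
  simp_rw [hkernel] at key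
  rw [integral_sq_add_sq_pow_mul_exp_neg_pi_mul_sq_norm hij, finrank_euclideanSpace, hι,
    Nat.cast_mul, Nat.cast_two, mul_div_cancel_left₀ _ two_ne_zero] at key
  have hn : 0 < n := by
    have := Fintype.one_lt_card_iff.2 ⟨i, j, hij⟩
    omega
  have := Gamma_pos_of_pos (show (0 : ℝ) < n by positivity)
  have := Gamma_pos_of_pos (show (0 : ℝ) < n + p by positivity)
  rw [eq_div_of_mul_eq (by positivity) key.symm]
  field_simp

theorem eulerBeta_div_eulerBeta_one {a : ℝ} (ha : 0 < a) (b : ℝ) :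
    eulerBeta a b / eulerBeta a 1 = Gamma (a + 1) * Gamma b / Gamma (a + b) := by
  have := Gamma_pos_of_pos ha
  have := Gamma_pos_of_pos (add_pos ha one_pos)
  unfold eulerBeta
  rw [Gamma_one]
  field_simp

/-- The `p`-th moment of the first edgelength of a random planar arm of total length 2:
`E(|e₁|^p, Arm₂(n)) = 2^p · B(p,n)/B(p,1)`.  Here `μ` is the uniform (rotation-invariant)
probability measure on the unit sphere in `ℝ^{2n}`, and the first edgelength of the arm
determined by `√2·x` is `2(x₀² + x₁²)`. -/
theorem edgelength_moment_planar_arm (n p : ℕ) (hn : 1 ≤ n) (hp : 1 ≤ p)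
    (μ : Measure (EuclideanSpace ℝ (Fin (2 * n)))) [IsProbabilityMeasure μ]
    (hsphere : μ (Metric.sphere (0 : EuclideanSpace ℝ (Fin (2 * n))) 1) = 1)
    (hinv : ∀ O : EuclideanSpace ℝ (Fin (2 * n)) ≃ₗᵢ[ℝ] EuclideanSpace ℝ (Fin (2 * n)),
      Measure.map (fun x => O x) μ = μ) :
    ∫ x, (2 * ((x ⟨0, by omega⟩) ^ 2 + (x ⟨1, by omega⟩) ^ 2)) ^ p ∂μ
      = 2 ^ p * eulerBeta p n / eulerBeta p 1 := by
  have hμ : ∀ᵐ x ∂μ, ‖x‖ = 1 :=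
    Filter.Eventually.mono ((mem_ae_iff_prob_eq_one Metric.isClosed_sphere.measurableSet).2 hsphere)
      fun x hx => by simpa using hx
  simp_rw [mul_pow]
  rw [integral_const_mul,
    integral_sq_add_sq_pow_of_map_linearIsometryEquiv_eq (Fintype.card_fin _) μ hμ hinv
      (by simp [Fin.ext_iff]), mul_div_assoc (2 ^ p : ℝ) (eulerBeta _ _),
    eulerBeta_div_eulerBeta_one (by positivity), add_comm (p : ℝ) n]
end

section
/- Let n ≥ 2 and let μ be the uniform (rotation-invariant) probability measure on the unit sphere in EuclideanSpace ℝ (Fin (2n)). Then the pushforward of μ under the edgelength map x ↦ 2·(x₀² + x₁²) (where x₀, x₁ are the first two coordinates of x) is the probability measure on ℝ with density y ↦ ((n−1)/2^{n−1}) · (2−y)^{n−2} on the interval [0,2] (and density 0 outside [0,2]) with respect to Lebesgue measure. -/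
/-!
Only the moments of `s = x₀² + x₁²` are needed, since a law on `[0, 2]` is determined by its
moments (Weierstrass approximation). Put `u = 1 - s`, which on the sphere is the sum of the squares
of the other `2n - 2` coordinates. Coordinate swaps are isometries, so `∫ x₀² uᵏ = ∫ x₁² uᵏ` and
`∫ x_j² φ(x₀, x₁)` is the same for all `j ≥ 2`. The one further relation comes from rotating in the
`(x₁, x₂)`-plane: `θ ↦ ∫ g ∘ R_θ dμ` is constant, so its derivative at `0` vanishes. Together these
give `(2n + 2k) ∫ uᵏ⁺¹ = (2n - 2 + 2k) ∫ uᵏ`, so `∫ uᵏ = (n - 1) / (n - 1 + k)`, and these are the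
moments of `(2 - y) / 2 = u` under the density `(2 - y)ⁿ⁻²` on `[0, 2]`.
-/

open MeasureTheory Real Set Finset

section CompactSupport

variable {E : Type*} [TopologicalSpace E] [MeasurableSpace E] [OpensMeasurableSpace E]
  {μ : Measure E} [IsFiniteMeasure μ] {K : Set E}

theorem Continuous.integrable_of_ae_mem_compact {f : E → ℝ} (hf : Continuous f)
    (hK : IsCompact K) (hμK : ∀ᵐ x ∂μ, x ∈ K) : Integrable f μ := by
  obtain ⟨C, hC⟩ := hK.exists_bound_of_continuousOn hf.continuousOn
  exact (integrable_const C).mono' hf.aestronglyMeasurable (hμK.mono hC)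

theorem hasDerivAt_integral_of_ae_mem_compact {F F' : ℝ → E → ℝ} (hK : IsCompact K)
    (hμK : ∀ᵐ x ∂μ, x ∈ K) (hF : Continuous F.uncurry) (hF' : Continuous F'.uncurry)
    (hderiv : ∀ θ x, HasDerivAt (F · x) (F' θ x) θ) (θ₀ : ℝ) :
    HasDerivAt (fun θ => ∫ x, F θ x ∂μ) (∫ x, F' θ₀ x ∂μ) θ₀ := by
  obtain ⟨C, hC⟩ :=
    ((isCompact_closedBall θ₀ 1).prod hK).exists_bound_of_continuousOn hF'.continuousOn
  have hslice : ∀ {G : ℝ → E → ℝ}, Continuous G.uncurry → ∀ θ, Continuous (G θ) :=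
    fun hG θ => hG.comp (Continuous.prodMk_right θ)
  refine (hasDerivAt_integral_of_dominated_loc_of_deriv_le (bound := fun _ => C)
    (Metric.ball_mem_nhds θ₀ one_pos)
    (.of_forall fun θ => (hslice hF θ).aestronglyMeasurable)
    ((hslice hF θ₀).integrable_of_ae_mem_compact hK hμK) (hslice hF' θ₀).aestronglyMeasurable
    ?_ (integrable_const C) (.of_forall fun x θ _ => hderiv θ x)).2
  exact hμK.mono fun x hx θ hθ => hC (θ, x) ⟨Metric.ball_subset_closedBall hθ, hx⟩

end CompactSupport

section Moments

open Polynomial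

variable {a b c : ℝ} {ξ₁ ξ₂ : Measure ℝ} [IsFiniteMeasure ξ₁] [IsFiniteMeasure ξ₂]

theorem integral_eval_eq_of_integral_sub_pow_eq (h₁ : ∀ᵐ y ∂ξ₁, y ∈ Icc a b)
    (h₂ : ∀ᵐ y ∂ξ₂, y ∈ Icc a b) (hmom : ∀ k : ℕ, ∫ y, (y - c) ^ k ∂ξ₁ = ∫ y, (y - c) ^ k ∂ξ₂)
    (P : ℝ[X]) : ∫ y, P.eval y ∂ξ₁ = ∫ y, P.eval y ∂ξ₂ := by
  set Q := P.comp (X + C c)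
  have hexpand : ∀ (ξ : Measure ℝ) [IsFiniteMeasure ξ], (∀ᵐ y ∂ξ, y ∈ Icc a b) →
      ∫ y, P.eval y ∂ξ = ∑ i ∈ range (Q.natDegree + 1), Q.coeff i * ∫ y, (y - c) ^ i ∂ξ := by
    intro ξ _ hξ
    have hP : ∀ y, P.eval y = ∑ i ∈ range (Q.natDegree + 1), Q.coeff i * (y - c) ^ i := by
      intro y
      rw [← eval_eq_sum_range, eval_comp]
      simp
    simp_rw [hP, ← integral_const_mul]
    exact integral_finsetSum _ fun i _ =>
      (by fun_prop : Continuous _).integrable_of_ae_mem_compact isCompact_Icc hξ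
  simp only [hexpand ξ₁ h₁, hexpand ξ₂ h₂, hmom]

theorem MeasureTheory.Measure.ext_of_integral_sub_pow_eq (h₁ : ∀ᵐ y ∂ξ₁, y ∈ Icc a b)
    (h₂ : ∀ᵐ y ∂ξ₂, y ∈ Icc a b) (hmom : ∀ k : ℕ, ∫ y, (y - c) ^ k ∂ξ₁ = ∫ y, (y - c) ^ k ∂ξ₂) :
    ξ₁ = ξ₂ := by
  refine ext_of_forall_integral_eq_of_IsFiniteMeasure fun f => eq_of_forall_dist_le fun ε hε => ?_
  set M := ξ₁.real univ + ξ₂.real univ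
  obtain ⟨P, hP⟩ := exists_polynomial_near_of_continuousOn a b f f.continuous.continuousOn
    (ε / (M + 1)) (by positivity)
  have happrox : ∀ (ξ : Measure ℝ) [IsFiniteMeasure ξ], (∀ᵐ y ∂ξ, y ∈ Icc a b) →
      dist (∫ y, f y ∂ξ) (∫ y, P.eval y ∂ξ) ≤ ε / (M + 1) * ξ.real univ := by
    intro ξ _ hξ
    rw [dist_eq_norm, ← integral_sub (f.continuous.integrable_of_ae_mem_compact isCompact_Icc hξ)
      (P.continuous.integrable_of_ae_mem_compact isCompact_Icc hξ)]
    refine norm_integral_le_of_norm_le_const (hξ.mono fun y hy => ?_)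
    rw [Real.norm_eq_abs, abs_sub_comm]
    exact (hP y hy).le
  have hpoly := integral_eval_eq_of_integral_sub_pow_eq h₁ h₂ hmom P
  calc dist (∫ y, f y ∂ξ₁) (∫ y, f y ∂ξ₂)
      ≤ dist (∫ y, f y ∂ξ₁) (∫ y, P.eval y ∂ξ₁) + dist (∫ y, f y ∂ξ₂) (∫ y, P.eval y ∂ξ₂) := by
        rw [hpoly, dist_comm (∫ y, f y ∂ξ₂)]; exact dist_triangle _ _ _
    _ ≤ ε / (M + 1) * M := by rw [mul_add]; exact add_le_add (happrox ξ₁ h₁) (happrox ξ₂ h₂)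
    _ ≤ ε := by
        rw [div_mul_eq_mul_div, div_le_iff₀ (by positivity)]
        nlinarith

end Moments

theorem HasDerivAt.mul_mul_sub_sq_pow {A B : ℝ → ℝ} {θ : ℝ} (hA : HasDerivAt A (-B θ) θ)
    (hB : HasDerivAt B (A θ) θ) (d : ℝ) (k : ℕ) :
    HasDerivAt (fun t => A t * B t * (d - A t ^ 2) ^ k)
      ((A θ ^ 2 - B θ ^ 2) * (d - A θ ^ 2) ^ k
        + 2 * k * (B θ ^ 2 * (A θ ^ 2 * (d - A θ ^ 2) ^ (k - 1)))) θ := by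
  refine ((hA.mul hB).mul (((hA.pow 2).const_sub d).pow k)).congr_deriv ?_
  cases k <;> simp <;> ring

namespace EuclideanSpace

variable {N : ℕ}

noncomputable def coordSwap (i j : Fin N) :
    EuclideanSpace ℝ (Fin N) ≃ₗᵢ[ℝ] EuclideanSpace ℝ (Fin N) :=
  LinearIsometryEquiv.piLpCongrLeft 2 ℝ ℝ (Equiv.swap i j)

@[simp] theorem coordSwap_apply (i j : Fin N) (x : EuclideanSpace ℝ (Fin N)) (m : Fin N) :
    coordSwap i j x m = x (Equiv.swap i j m) := by
  simp [coordSwap, LinearIsometryEquiv.piLpCongrLeft_apply, Equiv.piCongrLeft'_apply]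

theorem sum_compl_pair_sq {i j : Fin N} (x : EuclideanSpace ℝ (Fin N)) (hij : i ≠ j) :
    ∑ m ∈ {i, j}ᶜ, x m ^ 2 = ‖x‖ ^ 2 - (x i ^ 2 + x j ^ 2) := by
  rw [real_norm_sq_eq, ← sum_compl_add_sum {i, j}, sum_pair hij]
  ring

theorem sq_add_sq_le_norm_sq {i j : Fin N} (x : EuclideanSpace ℝ (Fin N)) (hij : i ≠ j) :
    x i ^ 2 + x j ^ 2 ≤ ‖x‖ ^ 2 := by
  linarith [sum_compl_pair_sq x hij, sum_nonneg fun m (_ : m ∈ ({i, j} : Finset (Fin N))ᶜ) =>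
    sq_nonneg (x m)]

noncomputable def planeRotation (θ : ℝ) {i j : Fin N} (hij : i ≠ j) :
    EuclideanSpace ℝ (Fin N) ≃ₗᵢ[ℝ] EuclideanSpace ℝ (Fin N) :=
  LinearIsometry.toLinearIsometryEquiv
    { toFun := fun x => WithLp.toLp 2 fun m =>
        if m = i then cos θ * x i - sin θ * x j
        else if m = j then sin θ * x i + cos θ * x j else x m
      map_add' := fun x y => by ext m; simp only [PiLp.add_apply]; split_ifs <;> ring
      map_smul' := fun r x => by
        ext m; simp only [PiLp.smul_apply, smul_eq_mul, RingHom.id_apply]; split_ifs <;> ring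
      norm_map' := fun x => by
        simp only [LinearMap.coe_mk, AddHom.coe_mk]
        rw [← sq_eq_sq₀ (norm_nonneg _) (norm_nonneg _), EuclideanSpace.real_norm_sq_eq,
          EuclideanSpace.real_norm_sq_eq]
        have hsq : ∀ m, (if m = i then cos θ * x i - sin θ * x j
            else if m = j then sin θ * x i + cos θ * x j else x m) ^ 2
            = x m ^ 2 + (if m = i then (cos θ * x i - sin θ * x j) ^ 2 - x i ^ 2 else 0)
              + (if m = j then (sin θ * x i + cos θ * x j) ^ 2 - x j ^ 2 else 0) := by
          intro m
          split_ifs <;> subst_vars <;> first | exact absurd rfl hij | ring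
        simp only [hsq, sum_add_distrib, sum_ite_eq', Finset.mem_univ, ite_true]
        linear_combination (x i ^ 2 + x j ^ 2) * sin_sq_add_cos_sq θ }
    rfl

variable (θ : ℝ) {i j : Fin N} (hij : i ≠ j) (x : EuclideanSpace ℝ (Fin N))

@[simp] theorem planeRotation_apply_left :
    planeRotation θ hij x i = cos θ * x i - sin θ * x j := by
  simp [planeRotation]

@[simp] theorem planeRotation_apply_right :
    planeRotation θ hij x j = sin θ * x i + cos θ * x j := by
  simp [planeRotation, hij.symm]

theorem planeRotation_apply_of_ne {m : Fin N} (hmi : m ≠ i) (hmj : m ≠ j) :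
    planeRotation θ hij x m = x m := by
  simp [planeRotation, hmi, hmj]

theorem hasDerivAt_planeRotation_apply_left :
    HasDerivAt (fun θ => planeRotation θ hij x i) (-planeRotation θ hij x j) θ := by
  simp only [planeRotation_apply_left, planeRotation_apply_right]
  exact (((hasDerivAt_cos θ).mul_const (x i)).sub ((hasDerivAt_sin θ).mul_const (x j))).congr_deriv
    (by ring)

theorem hasDerivAt_planeRotation_apply_right :
    HasDerivAt (fun θ => planeRotation θ hij x j) (planeRotation θ hij x i) θ := by
  simp only [planeRotation_apply_left, planeRotation_apply_right]
  exact (((hasDerivAt_sin θ).mul_const (x i)).add ((hasDerivAt_cos θ).mul_const (x j))).congr_deriv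
    (by ring)

theorem continuous_planeRotation : Continuous fun p : ℝ × EuclideanSpace ℝ (Fin N) =>
    planeRotation p.1 hij p.2 := by
  refine (PiLp.continuous_toLp 2 _).comp (continuous_pi fun m => ?_)
  change Continuous fun p : ℝ × EuclideanSpace ℝ (Fin N) =>
    if m = i then cos p.1 * p.2 i - sin p.1 * p.2 j
    else if m = j then sin p.1 * p.2 i + cos p.1 * p.2 j else p.2 m
  split_ifs <;> fun_prop

section Invariant

variable {μ : Measure (EuclideanSpace ℝ (Fin N))}

theorem integral_comp_linearIsometryEquiv_of_map_eq
    {O : EuclideanSpace ℝ (Fin N) ≃ₗᵢ[ℝ] EuclideanSpace ℝ (Fin N)} (hO : μ.map O = μ)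
    (g : EuclideanSpace ℝ (Fin N) → ℝ) : ∫ x, g (O x) ∂μ = ∫ x, g x ∂μ :=
  MeasurePreserving.integral_comp' (f := O.toHomeomorph.toMeasurableEquiv)
    ⟨O.continuous.measurable, hO⟩ g

theorem integral_sq_mul_eq_of_coordSwap_invariant {i j : Fin N}
    (hswap : μ.map (coordSwap i j) = μ) {g : EuclideanSpace ℝ (Fin N) → ℝ}
    (hg : ∀ x, g (coordSwap i j x) = g x) :
    ∫ x, x i ^ 2 * g x ∂μ = ∫ x, x j ^ 2 * g x ∂μ := by
  rw [← integral_comp_linearIsometryEquiv_of_map_eq hswap]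
  simp [hg]

variable [IsFiniteMeasure μ] (hμ : ∀ᵐ x ∂μ, x ∈ Metric.sphere (0 : EuclideanSpace ℝ (Fin N)) 1)
include hμ

theorem integral_eq_zero_of_hasDerivAt_planeRotation {i j : Fin N} {hij : i ≠ j}
    (hrot : ∀ θ, μ.map (planeRotation θ hij) = μ) {g g' : EuclideanSpace ℝ (Fin N) → ℝ}
    (hg : Continuous g) (hg' : Continuous g')
    (hderiv : ∀ θ x,
      HasDerivAt (fun θ => g (planeRotation θ hij x)) (g' (planeRotation θ hij x)) θ) :
    ∫ x, g' x ∂μ = 0 := by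
  have h := hasDerivAt_integral_of_ae_mem_compact (isCompact_sphere 0 1) hμ
    (F := fun θ x => g (planeRotation θ hij x)) (F' := fun θ x => g' (planeRotation θ hij x))
    (hg.comp (continuous_planeRotation hij)) (hg'.comp (continuous_planeRotation hij)) hderiv 0
  simp only [integral_comp_linearIsometryEquiv_of_map_eq (hrot _)] at h
  exact h.unique (hasDerivAt_const 0 _)

variable (hinv : ∀ O : EuclideanSpace ℝ (Fin N) ≃ₗᵢ[ℝ] EuclideanSpace ℝ (Fin N), μ.map O = μ)
include hinv

theorem card_sub_two_mul_integral_sq_mul {i₀ i₁ j : Fin N} (h₀₁ : i₀ ≠ i₁) (hj₀ : j ≠ i₀)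
    (hj₁ : j ≠ i₁) {φ : ℝ → ℝ → ℝ} (hφ : Continuous φ.uncurry) :
    ((N : ℝ) - 2) * ∫ x, x j ^ 2 * φ (x i₀) (x i₁) ∂μ
      = ∫ x, (1 - x i₀ ^ 2 - x i₁ ^ 2) * φ (x i₀) (x i₁) ∂μ := by
  have hcont : Continuous fun x : EuclideanSpace ℝ (Fin N) => φ (x i₀) (x i₁) :=
    hφ.comp (by fun_prop : Continuous fun x : EuclideanSpace ℝ (Fin N) => (x i₀, x i₁))
  have hsum : ∀ᵐ x ∂μ, (1 - x i₀ ^ 2 - x i₁ ^ 2) * φ (x i₀) (x i₁)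
      = ∑ m ∈ {i₀, i₁}ᶜ, x m ^ 2 * φ (x i₀) (x i₁) := hμ.mono fun x hx => by
    rw [← sum_mul, sum_compl_pair_sq x h₀₁, mem_sphere_zero_iff_norm.mp hx, one_pow, sub_sub]
  have hswap : ∀ m ∈ ({i₀, i₁} : Finset (Fin N))ᶜ,
      ∫ x, x m ^ 2 * φ (x i₀) (x i₁) ∂μ = ∫ x, x j ^ 2 * φ (x i₀) (x i₁) ∂μ := by
    intro m hm
    rw [Finset.mem_compl, Finset.mem_insert, Finset.mem_singleton, not_or] at hm
    refine integral_sq_mul_eq_of_coordSwap_invariant (hinv _) fun x => ?_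
    rw [coordSwap_apply, coordSwap_apply, Equiv.swap_apply_of_ne_of_ne (Ne.symm hm.1) hj₀.symm,
      Equiv.swap_apply_of_ne_of_ne (Ne.symm hm.2) hj₁.symm]
  rw [integral_congr_ae hsum, integral_finsetSum _ fun m _ =>
      Continuous.integrable_of_ae_mem_compact (by fun_prop) (isCompact_sphere 0 1) hμ,
    sum_congr rfl hswap, sum_const, card_compl, Fintype.card_fin, card_pair h₀₁, nsmul_eq_mul,
    Nat.cast_sub (by simpa [card_pair h₀₁] using card_le_univ ({i₀, i₁} : Finset (Fin N)))]
  norm_num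

-- The integrand is `d/dθ g (R_θ x)` at `θ = 0`, where `g = x_{i₁} x_j (1 - x_{i₀}² - x_{i₁}²)ᵏ`
-- and `R_θ` is the rotation in the `(i₁, j)`-plane.
theorem integral_sq_sub_sq_mul_pow_add_eq_zero {i₀ i₁ j : Fin N} (h₀₁ : i₀ ≠ i₁) (h₀j : i₀ ≠ j)
    (h₁j : i₁ ≠ j) (k : ℕ) :
    ∫ x, ((x i₁ ^ 2 - x j ^ 2) * (1 - x i₀ ^ 2 - x i₁ ^ 2) ^ k
      + 2 * k * (x j ^ 2 * (x i₁ ^ 2 * (1 - x i₀ ^ 2 - x i₁ ^ 2) ^ (k - 1)))) ∂μ = 0 :=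
  integral_eq_zero_of_hasDerivAt_planeRotation hμ (hij := h₁j) (fun θ => hinv _)
    (g := fun y => y i₁ * y j * (1 - y i₀ ^ 2 - y i₁ ^ 2) ^ k) (by fun_prop) (by fun_prop)
    fun θ x => by
      simpa only [planeRotation_apply_of_ne _ h₁j x h₀₁ h₀j] using
        (hasDerivAt_planeRotation_apply_left θ h₁j x).mul_mul_sub_sq_pow
          (hasDerivAt_planeRotation_apply_right θ h₁j x) (1 - x i₀ ^ 2) k

theorem integral_one_sub_sq_sub_sq_pow_succ {i₀ i₁ j : Fin N} (h₀₁ : i₀ ≠ i₁) (h₀j : i₀ ≠ j)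
    (h₁j : i₁ ≠ j) (k : ℕ) :
    ((N : ℝ) + 2 * k) * ∫ x, (1 - x i₀ ^ 2 - x i₁ ^ 2) ^ (k + 1) ∂μ
      = ((N : ℝ) - 2 + 2 * k) * ∫ x, (1 - x i₀ ^ 2 - x i₁ ^ 2) ^ k ∂μ := by
  have hint : ∀ {f : EuclideanSpace ℝ (Fin N) → ℝ}, Continuous f → Integrable f μ :=
    fun hf => hf.integrable_of_ae_mem_compact (isCompact_sphere 0 1) hμ
  have hrot := integral_sq_sub_sq_mul_pow_add_eq_zero hμ hinv h₀₁ h₀j h₁j k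
  simp only [sub_mul] at hrot
  rw [integral_add (hint (by fun_prop)) (hint (by fun_prop)),
    integral_sub (hint (by fun_prop)) (hint (by fun_prop)), integral_const_mul] at hrot
  have hswap : ∫ x, x i₀ ^ 2 * (1 - x i₀ ^ 2 - x i₁ ^ 2) ^ k ∂μ
      = ∫ x, x i₁ ^ 2 * (1 - x i₀ ^ 2 - x i₁ ^ 2) ^ k ∂μ :=
    integral_sq_mul_eq_of_coordSwap_invariant (hinv _) fun x => by
      simp only [coordSwap_apply, Equiv.swap_apply_left, Equiv.swap_apply_right]
      ring
  have hpair : ∫ x, x i₀ ^ 2 * (1 - x i₀ ^ 2 - x i₁ ^ 2) ^ k ∂μ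
        + ∫ x, x i₁ ^ 2 * (1 - x i₀ ^ 2 - x i₁ ^ 2) ^ k ∂μ
      = ∫ x, (1 - x i₀ ^ 2 - x i₁ ^ 2) ^ k ∂μ
        - ∫ x, (1 - x i₀ ^ 2 - x i₁ ^ 2) ^ (k + 1) ∂μ := by
    rw [← integral_add (hint (by fun_prop)) (hint (by fun_prop)),
      ← integral_sub (hint (by fun_prop)) (hint (by fun_prop))]
    congr 1 with x
    ring
  have hcompl := card_sub_two_mul_integral_sq_mul hμ hinv h₀₁ h₀j.symm h₁j.symm
    (φ := fun a b => (1 - a ^ 2 - b ^ 2) ^ k) (by fun_prop)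
  simp only [← pow_succ'] at hcompl
  have hcompl' : (k : ℝ) * (((N : ℝ) - 2)
        * ∫ x, x j ^ 2 * (x i₁ ^ 2 * (1 - x i₀ ^ 2 - x i₁ ^ 2) ^ (k - 1)) ∂μ)
      = k * ∫ x, x i₁ ^ 2 * (1 - x i₀ ^ 2 - x i₁ ^ 2) ^ k ∂μ := by
    rcases k with _ | m
    · simp
    rw [Nat.add_sub_cancel, card_sub_two_mul_integral_sq_mul hμ hinv h₀₁ h₀j.symm h₁j.symm
      (φ := fun a b => b ^ 2 * (1 - a ^ 2 - b ^ 2) ^ m) (by fun_prop)]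
    congr 2 with x
    ring
  linear_combination ((N : ℝ) - 2 + 2 * k) * (hpair - hswap) - 2 * hcompl
    - 2 * ((N : ℝ) - 2) * hrot + 4 * hcompl'

theorem integral_one_sub_sq_sub_sq_pow [IsProbabilityMeasure μ] {i₀ i₁ : Fin N} (h₀₁ : i₀ ≠ i₁)
    (hN : 2 < N) (k : ℕ) :
    ∫ x, (1 - x i₀ ^ 2 - x i₁ ^ 2) ^ k ∂μ = ((N : ℝ) - 2) / ((N : ℝ) - 2 + 2 * k) := by
  obtain ⟨j, hj⟩ : ({i₀, i₁}ᶜ : Finset (Fin N)).Nonempty := by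
    rw [← card_pos, card_compl, Fintype.card_fin, card_pair h₀₁]
    omega
  rw [Finset.mem_compl, Finset.mem_insert, Finset.mem_singleton, not_or] at hj
  have hN' : (2 : ℝ) < N := by exact_mod_cast hN
  induction k with
  | zero => simp [(by linarith : (N : ℝ) - 2 ≠ 0)]
  | succ k ih =>
    have hrec := integral_one_sub_sq_sub_sq_pow_succ hμ hinv h₀₁ (Ne.symm hj.1) (Ne.symm hj.2) k
    have hk : (0 : ℝ) ≤ k := k.cast_nonneg
    rw [ih, mul_div_cancel₀ _ (by positivity)] at hrec
    rw [eq_div_iff (by positivity)]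
    push_cast
    linear_combination hrec

end Invariant

end EuclideanSpace

noncomputable def edgelengthPDF (n : ℕ) (y : ℝ) : ℝ :=
  (Icc (0 : ℝ) 2).indicator (fun y => (((n : ℝ) - 1) / 2 ^ (n - 1)) * (2 - y) ^ (n - 2)) y

theorem edgelengthPDF_nonneg {n : ℕ} (hn : 1 ≤ n) (y : ℝ) : 0 ≤ edgelengthPDF n y := by
  refine indicator_nonneg (fun y hy => ?_) y
  have : (1 : ℝ) ≤ n := by exact_mod_cast hn
  have : 0 ≤ 2 - y := by linarith [hy.2]
  positivity

theorem measurable_edgelengthPDF (n : ℕ) : Measurable (edgelengthPDF n) :=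
  (by fun_prop : Continuous fun y : ℝ => (((n : ℝ) - 1) / 2 ^ (n - 1)) * (2 - y) ^ (n - 2))
    |>.measurable.indicator measurableSet_Icc

theorem integral_withDensity_edgelengthPDF {n : ℕ} (hn : 1 ≤ n) (g : ℝ → ℝ) :
    ∫ y, g y ∂volume.withDensity (fun y => ENNReal.ofReal (edgelengthPDF n y))
      = ∫ y in (0 : ℝ)..2, (((n : ℝ) - 1) / 2 ^ (n - 1)) * (2 - y) ^ (n - 2) * g y := by
  rw [integral_withDensity_eq_integral_toReal_smul (measurable_edgelengthPDF n).ennreal_ofReal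
    (.of_forall fun _ => ENNReal.ofReal_lt_top)]
  simp only [ENNReal.toReal_ofReal (edgelengthPDF_nonneg hn _), smul_eq_mul]
  simp only [edgelengthPDF, ← indicator_mul_left]
  rw [integral_indicator measurableSet_Icc, integral_Icc_eq_integral_Ioc,
    intervalIntegral.integral_of_le zero_le_two]

theorem isFiniteMeasure_withDensity_edgelengthPDF (n : ℕ) :
    IsFiniteMeasure (volume.withDensity fun y => ENNReal.ofReal (edgelengthPDF n y)) :=
  isFiniteMeasure_withDensity_ofReal
    ((by fun_prop : Continuous fun y : ℝ => (((n : ℝ) - 1) / 2 ^ (n - 1)) * (2 - y) ^ (n - 2))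
      |>.integrableOn_Icc.integrable_indicator measurableSet_Icc).hasFiniteIntegral

theorem ae_mem_Icc_withDensity_edgelengthPDF (n : ℕ) :
    ∀ᵐ y ∂volume.withDensity (fun y => ENNReal.ofReal (edgelengthPDF n y)), y ∈ Icc (0 : ℝ) 2 :=
  (ae_withDensity_iff (measurable_edgelengthPDF n).ennreal_ofReal).2 <| .of_forall fun y hy =>
    mem_of_indicator_ne_zero fun h => hy (by rw [edgelengthPDF, h, ENNReal.ofReal_zero])

theorem integral_sub_two_pow_withDensity_edgelengthPDF {n : ℕ} (hn : 2 ≤ n) (k : ℕ) :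
    ∫ y, (y - 2) ^ k ∂volume.withDensity (fun y => ENNReal.ofReal (edgelengthPDF n y))
      = (-2) ^ k * (((n : ℝ) - 1) / ((n : ℝ) - 1 + k)) := by
  obtain ⟨m, rfl⟩ : ∃ m, n = m + 2 := ⟨n - 2, by omega⟩
  rw [integral_withDensity_edgelengthPDF (by omega)]
  have hpow : ∀ y : ℝ,
      (((m + 2 : ℕ) : ℝ) - 1) / 2 ^ (m + 2 - 1) * (2 - y) ^ (m + 2 - 2) * (y - 2) ^ k
        = (((m : ℝ) + 1) / 2 ^ (m + 1) * (-1) ^ k) * (2 - y) ^ (m + k) := by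
    intro y
    rw [show m + 2 - 1 = m + 1 by omega, show m + 2 - 2 = m by omega, ← neg_sub (2 : ℝ) y,
      neg_pow, pow_add]
    push_cast
    ring
  simp only [hpow]
  rw [intervalIntegral.integral_const_mul, intervalIntegral.integral_comp_sub_left
    (fun t => t ^ (m + k)), integral_pow]
  have hne : (0 : ℝ) < m + 2 - 1 + k := by linarith [m.cast_nonneg (α := ℝ), k.cast_nonneg (α := ℝ)]
  push_cast
  rw [neg_pow (2 : ℝ)]
  field_simp
  ring

/-- The pushforward of the uniform probability measure on the unit sphere in `ℝ^{2n}` under the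
first-edgelength map `x ↦ 2(x₀²+x₁²)` is the Beta-type distribution on `[0,2]` with
density `y ↦ ((n−1)/2^{n−1})·(2−y)^{n−2}`. -/
theorem edgelength_pdf_planar_arm (n : ℕ) (hn : 2 ≤ n)
    (μ : Measure (EuclideanSpace ℝ (Fin (2 * n)))) [IsProbabilityMeasure μ]
    (hsphere : μ (Metric.sphere (0 : EuclideanSpace ℝ (Fin (2 * n))) 1) = 1)
    (hinv : ∀ O : EuclideanSpace ℝ (Fin (2 * n)) ≃ₗᵢ[ℝ] EuclideanSpace ℝ (Fin (2 * n)),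
      Measure.map (fun x => O x) μ = μ) :
    Measure.map
        (fun x : EuclideanSpace ℝ (Fin (2 * n)) =>
          2 * ((x ⟨0, by omega⟩) ^ 2 + (x ⟨1, by omega⟩) ^ 2)) μ
      = MeasureTheory.volume.withDensity (fun y : ℝ => ENNReal.ofReal
          ((Set.Icc (0 : ℝ) 2).indicator
            (fun y => (((n : ℝ) - 1) / 2 ^ (n - 1)) * (2 - y) ^ (n - 2)) y)) := by
  change _ = volume.withDensity fun y => ENNReal.ofReal (edgelengthPDF n y)
  have h₀₁ : (⟨0, by omega⟩ : Fin (2 * n)) ≠ ⟨1, by omega⟩ := by simp [Fin.ext_iff]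
  have hμ : ∀ᵐ x ∂μ, x ∈ Metric.sphere (0 : EuclideanSpace ℝ (Fin (2 * n))) 1 := by
    rw [ae_mem_iff_measure_eq Metric.isClosed_sphere.measurableSet.nullMeasurableSet, hsphere,
      measure_univ]
  have hf : Continuous fun x : EuclideanSpace ℝ (Fin (2 * n)) =>
      2 * ((x ⟨0, by omega⟩) ^ 2 + (x ⟨1, by omega⟩) ^ 2) := by fun_prop
  have := isFiniteMeasure_withDensity_edgelengthPDF n
  refine Measure.ext_of_integral_sub_pow_eq (c := 2) ?_ (ae_mem_Icc_withDensity_edgelengthPDF n)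
    fun k => ?_
  · refine (ae_map_iff (p := (· ∈ Icc (0 : ℝ) 2)) hf.aemeasurable measurableSet_Icc).2 <|
      hμ.mono fun x hx => ⟨by positivity, ?_⟩
    have := EuclideanSpace.sq_add_sq_le_norm_sq x h₀₁
    rw [mem_sphere_zero_iff_norm.mp hx] at this
    linarith
  · rw [integral_map hf.aemeasurable
      (by fun_prop : Continuous fun y : ℝ => (y - 2) ^ k).aestronglyMeasurable,
      integral_sub_two_pow_withDensity_edgelengthPDF hn]
    simp_rw [show ∀ a b : ℝ, (2 * (a + b) - 2) ^ k = (-2) ^ k * (1 - a - b) ^ k by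
      intro a b; rw [← mul_pow]; ring]
    rw [integral_const_mul,
      EuclideanSpace.integral_one_sub_sq_sub_sq_pow hμ hinv h₀₁ (by omega) k]
    have : (1 : ℝ) < n := by exact_mod_cast hn
    push_cast
    field_simp
end
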